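/- arXiv:2502.13541 — 9 statements merged into one kernel-verified Lean document; each statement's English description precedes it below -/
import Mathlib

section
/- Let v be a monotone and subadditive set function on subsets of a finite set S with v(∅) = 0, and suppose v({e}) ≤ b for every e ∈ S, where b ≥ 0. Let S' be a random subset of S that includes each element e independently with probability p_e ∈ [0,1], and let M be a median of v(S'). Then E[v(S')] ≤ (3/2)·M + (11/8)·b. -/
open scoped Classical

/-- Probability weight of obtaining exactly the subset `T` when each element `e`
of the ground set is included independently with probability `p e`. -/
noncomputable def subsetWt {α : Type*} [Fintype α] [DecidableEq α]
    (p : α → ℝ) (T : Finset α) : ℝ :=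
  ∏ e : α, if e ∈ T then p e else 1 - p e

/-- Probability of the event `E` under independent sampling with probabilities `p`. -/
noncomputable def prEvent {α : Type*} [Fintype α] [DecidableEq α]
    (p : α → ℝ) (E : Finset α → Prop) : ℝ :=
  ∑ T : Finset α, if E T then subsetWt p T else 0

/-- Expected value of `v` of the random subset sampled with probabilities `p`. -/
noncomputable def expVal {α : Type*} [Fintype α] [DecidableEq α]
    (p : α → ℝ) (v : Finset α → ℝ) : ℝ :=
  ∑ T : Finset α, subsetWt p T * v T

namespace StmtAux

variable {α : Type*} [DecidableEq α]

/-- Weight of subset `x` relative to ground set `s`. -/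
noncomputable def W (p : α → ℝ) (s x : Finset α) : ℝ :=
  ∏ e ∈ s, if e ∈ x then p e else 1 - p e

/-- Measure of a family relative to ground set `s`. -/
noncomputable def fm (p : α → ℝ) (s : Finset α) (F : Finset (Finset α)) : ℝ :=
  ∑ y ∈ F, W p s y

/-- Two-point cover distance of `x` to the pair of families `A`, `B`. -/
noncomputable def hd (A B : Finset (Finset α)) (x : Finset α) : ℕ :=
  if h : (A ×ˢ B).Nonempty then
    ((A ×ˢ B).image fun yz => (x \ (yz.1 ∪ yz.2)).card).min'
      (h.image _)
  else x.card

lemma hd_le {A B : Finset (Finset α)} {y z : Finset α} (hy : y ∈ A) (hz : z ∈ B)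
    (x : Finset α) : hd A B x ≤ (x \ (y ∪ z)).card := by
  have hne : (A ×ˢ B).Nonempty := ⟨(y, z), Finset.mem_product.2 ⟨hy, hz⟩⟩
  rw [hd, dif_pos hne]
  exact Finset.min'_le _ _ (Finset.mem_image.2 ⟨(y, z), Finset.mem_product.2 ⟨hy, hz⟩, rfl⟩)

lemma hd_exists {A B : Finset (Finset α)} (hA : A.Nonempty) (hB : B.Nonempty)
    (x : Finset α) : ∃ y ∈ A, ∃ z ∈ B, hd A B x = (x \ (y ∪ z)).card := by
  have hne : (A ×ˢ B).Nonempty :=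
    ⟨(hA.choose, hB.choose), Finset.mem_product.2 ⟨hA.choose_spec, hB.choose_spec⟩⟩
  rw [hd, dif_pos hne]
  have hmem := Finset.min'_mem ((A ×ˢ B).image fun yz => (x \ (yz.1 ∪ yz.2)).card)
    (hne.image _)
  obtain ⟨⟨y, z⟩, hyz, heq⟩ := Finset.mem_image.1 hmem
  exact ⟨y, (Finset.mem_product.1 hyz).1, z, (Finset.mem_product.1 hyz).2, heq.symm⟩

lemma W_nonneg {p : α → ℝ} (hp : ∀ e, 0 ≤ p e ∧ p e ≤ 1) (s x : Finset α) :
    0 ≤ W p s x := by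
  refine Finset.prod_nonneg fun e _ => ?_
  by_cases h : e ∈ x
  · simpa [h] using (hp e).1
  · simp only [h, if_false]
    linarith [(hp e).2]

lemma W_congr {p : α → ℝ} {s x y : Finset α} (h : ∀ e ∈ s, (e ∈ x ↔ e ∈ y)) :
    W p s x = W p s y :=
  Finset.prod_congr rfl fun e he => by rw [if_congr (h e he) rfl rfl]

lemma W_insert {p : α → ℝ} {e : α} {s' : Finset α} (he : e ∉ s') (x : Finset α) :
    W p (insert e s') x = (if e ∈ x then p e else 1 - p e) * W p s' x :=
  Finset.prod_insert he

lemma fm_nonneg {p : α → ℝ} (hp : ∀ e, 0 ≤ p e ∧ p e ≤ 1) (s : Finset α)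
    (F : Finset (Finset α)) : 0 ≤ fm p s F :=
  Finset.sum_nonneg fun y _ => W_nonneg hp s y

lemma fm_mono {p : α → ℝ} (hp : ∀ e, 0 ≤ p e ∧ p e ≤ 1) (s : Finset α)
    {F G : Finset (Finset α)} (h : F ⊆ G) : fm p s F ≤ fm p s G :=
  Finset.sum_le_sum_of_subset_of_nonneg h fun y _ _ => W_nonneg hp s y

/-- Splitting the measure of a family over the two fibers of an element. -/
lemma fm_split {p : α → ℝ} {e : α} {s' : Finset α} (he : e ∉ s')
    (A : Finset (Finset α)) :
    fm p (insert e s') A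
      = (1 - p e) * fm p s' (A.filter fun y => e ∉ y)
        + p e * fm p s' ((A.filter fun y => e ∈ y).image fun y => y.erase e) := by
  rw [fm, ← Finset.sum_filter_add_sum_filter_not A (fun y => e ∈ y)]
  rw [add_comm]
  congr 1
  · -- e ∉ y part
    rw [fm, Finset.mul_sum]
    refine Finset.sum_congr rfl fun y hy => ?_
    have hey : e ∉ y := by simpa using (Finset.mem_filter.1 hy).2
    rw [W_insert he, if_neg hey]
  · -- e ∈ y part
    rw [fm, Finset.sum_image, Finset.mul_sum]
    · refine Finset.sum_congr rfl fun y hy => ?_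
      have hey : e ∈ y := (Finset.mem_filter.1 hy).2
      rw [W_insert he, if_pos hey]
      congr 1
      exact W_congr fun e' he' => by
        constructor
        · intro h'; exact Finset.mem_erase.2 ⟨fun hc => he (hc ▸ he'), h'⟩
        · intro h'; exact Finset.mem_of_mem_erase h'
    · intro y hy z hz hyz
      have hey : e ∈ y := (Finset.mem_filter.1 hy).2
      have hez : e ∈ z := (Finset.mem_filter.1 hz).2
      rw [← Finset.insert_erase hey, ← Finset.insert_erase hez, show y.erase e = z.erase e from hyz]


/-- Scalar inequality for the "pay 2" case. -/
lemma scalar1 {r a0 a1 b0 b1 : ℝ} (hr0 : 0 ≤ r) (hr1 : r ≤ 1)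
    (ha1 : 0 ≤ a1) (hb1 : 0 ≤ b1) (ha : 2 * a1 ≤ a0) (hb : 2 * b1 ≤ b0) :
    ((1 - r) * a0 + r * a1) * ((1 - r) * b0 + r * b1) * (1 + r) ≤ a0 * b0 := by
  have hA : (1 - r) * a0 + r * a1 ≤ (1 - r / 2) * a0 := by nlinarith
  have hB : (1 - r) * b0 + r * b1 ≤ (1 - r / 2) * b0 := by nlinarith
  have hB0 : 0 ≤ (1 - r) * b0 + r * b1 := by nlinarith
  have ha0 : 0 ≤ a0 := by nlinarith
  have hb0 : 0 ≤ b0 := by nlinarith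
  have key : (1 - r / 2) * (1 - r / 2) * (1 + r) ≤ 1 := by
    nlinarith [sq_nonneg r, mul_nonneg (mul_nonneg hr0 hr0) (sub_nonneg.2 hr1)]
  calc ((1 - r) * a0 + r * a1) * ((1 - r) * b0 + r * b1) * (1 + r)
      ≤ ((1 - r / 2) * a0) * ((1 - r / 2) * b0) * (1 + r) := by
        have h1 : ((1 - r) * a0 + r * a1) * ((1 - r) * b0 + r * b1)
            ≤ ((1 - r / 2) * a0) * ((1 - r / 2) * b0) := by
          apply mul_le_mul hA hB hB0 (by nlinarith)
        exact mul_le_mul_of_nonneg_right h1 (by linarith)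
    _ = ((1 - r / 2) * (1 - r / 2) * (1 + r)) * (a0 * b0) := by ring
    _ ≤ 1 * (a0 * b0) := mul_le_mul_of_nonneg_right key (mul_nonneg ha0 hb0)
    _ = a0 * b0 := one_mul _

/-- Scalar inequality for the "use the heavy fiber" case. -/
lemma scalar2 {r a0 a1 : ℝ} (hr0 : 0 ≤ r) (hr1 : r ≤ 1)
    (ha1 : 0 ≤ a1) (h10 : a1 ≤ a0) (h01 : a0 ≤ 2 * a1) :
    ((1 - r) * a0 + r * a1) ^ 2 * ((1 - r) * a1 + r * a0) ≤ a0 ^ 2 * a1 := by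
  have hd0 : 0 ≤ a0 - a1 := by linarith
  have hda : a0 - a1 ≤ a1 := by linarith
  have key : a0 ^ 2 * a1 - ((1 - r) * a0 + r * a1) ^ 2 * ((1 - r) * a1 + r * a0)
      = r * (a0 - a1) * (a1 ^ 2 + a1 * (a0 - a1) * r - (1 - r) ^ 2 * (a0 - a1) ^ 2) := by
    ring
  have hbr : 0 ≤ a1 ^ 2 + a1 * (a0 - a1) * r - (1 - r) ^ 2 * (a0 - a1) ^ 2 := by
    have h1 : (1 - r) ^ 2 * (a0 - a1) ^ 2 ≤ 1 * (a0 - a1) ^ 2 := by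
      apply mul_le_mul_of_nonneg_right _ (sq_nonneg _)
      nlinarith
    have h2 : (a0 - a1) ^ 2 ≤ a1 ^ 2 := by nlinarith
    nlinarith [mul_nonneg (mul_nonneg ha1 hd0) hr0]
  nlinarith [mul_nonneg (mul_nonneg hr0 hd0) hbr]

/-- Sum of relative weights over the powerset is 1. -/
lemma sumW (p : α → ℝ) (s : Finset α) :
    ∑ x ∈ s.powerset, W p s x = 1 := by
  induction s using Finset.induction_on with
  | empty => simp [W]
  | @insert e s' he ih =>
    rw [Finset.sum_powerset_insert he]
    have h1 : ∀ x ∈ s'.powerset, W p (insert e s') x = (1 - p e) * W p s' x := by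
      intro x hx
      have hex : e ∉ x := fun hc => he (Finset.mem_powerset.1 hx hc)
      rw [W_insert he, if_neg hex]
    have h2 : ∀ x ∈ s'.powerset, W p (insert e s') (insert e x) = p e * W p s' x := by
      intro x hx
      rw [W_insert he, if_pos (Finset.mem_insert_self e x)]
      congr 1
      exact W_congr fun e' he' => by
        have hne : e' ≠ e := fun hc => he (hc ▸ he')
        simp [Finset.mem_insert, hne]
    rw [Finset.sum_congr rfl h1, Finset.sum_congr rfl h2, ← Finset.mul_sum, ← Finset.mul_sum, ih]
    ring


lemma two_pow_nonneg (k : ℕ) : (0:ℝ) ≤ 2 ^ k := by positivity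

/-- Talagrand's two-point inequality, multiplied-out form. -/
theorem tal (p : α → ℝ) (hp : ∀ e, 0 ≤ p e ∧ p e ≤ 1) :
    ∀ (s : Finset α) (A B : Finset (Finset α)),
      (∀ y ∈ A, y ⊆ s) → (∀ y ∈ B, y ⊆ s) →
      (∀ y ∈ A, ∀ z ⊆ y, z ∈ A) → (∀ y ∈ B, ∀ z ⊆ y, z ∈ B) →
      A.Nonempty → B.Nonempty →
      fm p s A * fm p s B * ∑ x ∈ s.powerset, W p s x * 2 ^ hd A B x ≤ 1 := by
  intro s
  induction s using Finset.induction_on with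
  | empty =>
    intro A B hAs hBs hAdc hBdc hAne hBne
    have hAeq : A = {∅} := by
      apply Finset.Subset.antisymm
      · intro y hy
        have : y = ∅ := Finset.subset_empty.1 (hAs y hy)
        simp [this]
      · intro y hy
        rw [Finset.mem_singleton] at hy
        obtain ⟨w, hw⟩ := hAne
        exact hy ▸ hAdc w hw ∅ (Finset.empty_subset w)
    have hBeq : B = {∅} := by
      apply Finset.Subset.antisymm
      · intro y hy
        have : y = ∅ := Finset.subset_empty.1 (hBs y hy)
        simp [this]
      · intro y hy
        rw [Finset.mem_singleton] at hy
        obtain ⟨w, hw⟩ := hBne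
        exact hy ▸ hBdc w hw ∅ (Finset.empty_subset w)
    subst hAeq hBeq
    have hhd : hd ({∅} : Finset (Finset α)) {∅} (∅ : Finset α) = 0 := by
      have := hd_le (Finset.mem_singleton_self (∅ : Finset α))
        (Finset.mem_singleton_self (∅ : Finset α)) (∅ : Finset α)
      simpa using this
    simp [fm, W, hhd]
  | @insert e s' he ih =>
    intro A B hAs hBs hAdc hBdc hAne hBne
    obtain ⟨hpe0, hpe1⟩ := hp e
    set r := p e with hrdef
    -- the four fiber families
    set A0 := A.filter (fun y => e ∉ y) with hA0def
    set A1 := (A.filter fun y => e ∈ y).image (fun y => y.erase e) with hA1def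
    set B0 := B.filter (fun y => e ∉ y) with hB0def
    set B1 := (B.filter fun y => e ∈ y).image (fun y => y.erase e) with hB1def
    have hA0A : A0 ⊆ A := Finset.filter_subset _ _
    have hB0B : B0 ⊆ B := Finset.filter_subset _ _
    -- membership facts for A1/B1
    have hA1mem : ∀ y ∈ A1, insert e y ∈ A ∧ e ∉ y := by
      intro y hy
      obtain ⟨w, hw, hwe⟩ := Finset.mem_image.1 hy
      have hew : e ∈ w := (Finset.mem_filter.1 hw).2
      have hwA : w ∈ A := (Finset.mem_filter.1 hw).1
      constructor
      · rw [← hwe, Finset.insert_erase hew]; exact hwA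
      · rw [← hwe]; exact Finset.notMem_erase e w
    have hB1mem : ∀ y ∈ B1, insert e y ∈ B ∧ e ∉ y := by
      intro y hy
      obtain ⟨w, hw, hwe⟩ := Finset.mem_image.1 hy
      have hew : e ∈ w := (Finset.mem_filter.1 hw).2
      have hwB : w ∈ B := (Finset.mem_filter.1 hw).1
      constructor
      · rw [← hwe, Finset.insert_erase hew]; exact hwB
      · rw [← hwe]; exact Finset.notMem_erase e w
    have hA1A0 : A1 ⊆ A0 := by
      intro y hy
      obtain ⟨hyA, hye⟩ := hA1mem y hy
      exact Finset.mem_filter.2 ⟨hAdc _ hyA y (Finset.subset_insert e y), hye⟩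
    have hB1B0 : B1 ⊆ B0 := by
      intro y hy
      obtain ⟨hyB, hye⟩ := hB1mem y hy
      exact Finset.mem_filter.2 ⟨hBdc _ hyB y (Finset.subset_insert e y), hye⟩
    -- subset-of-s' facts
    have hA0s : ∀ y ∈ A0, y ⊆ s' := by
      intro y hy
      have h1 := hAs y (hA0A hy)
      have h2 : e ∉ y := by simpa using (Finset.mem_filter.1 hy).2
      intro t ht
      rcases Finset.mem_insert.1 (h1 ht) with h | h
      · exact absurd (h ▸ ht) h2
      · exact h
    have hB0s : ∀ y ∈ B0, y ⊆ s' := by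
      intro y hy
      have h1 := hBs y (hB0B hy)
      have h2 : e ∉ y := by simpa using (Finset.mem_filter.1 hy).2
      intro t ht
      rcases Finset.mem_insert.1 (h1 ht) with h | h
      · exact absurd (h ▸ ht) h2
      · exact h
    have hA1s : ∀ y ∈ A1, y ⊆ s' := fun y hy => hA0s y (hA1A0 hy)
    have hB1s : ∀ y ∈ B1, y ⊆ s' := fun y hy => hB0s y (hB1B0 hy)
    -- down-closedness
    have hA0dc : ∀ y ∈ A0, ∀ z ⊆ y, z ∈ A0 := by
      intro y hy z hz
      have h2 : e ∉ y := by simpa using (Finset.mem_filter.1 hy).2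
      exact Finset.mem_filter.2 ⟨hAdc y (hA0A hy) z hz, fun hc => h2 (hz hc)⟩
    have hB0dc : ∀ y ∈ B0, ∀ z ⊆ y, z ∈ B0 := by
      intro y hy z hz
      have h2 : e ∉ y := by simpa using (Finset.mem_filter.1 hy).2
      exact Finset.mem_filter.2 ⟨hBdc y (hB0B hy) z hz, fun hc => h2 (hz hc)⟩
    have hA1dc : ∀ y ∈ A1, ∀ z ⊆ y, z ∈ A1 := by
      intro y hy z hz
      obtain ⟨hyA, hye⟩ := hA1mem y hy
      have hzA : insert e z ∈ A := hAdc _ hyA _ (Finset.insert_subset_insert e hz)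
      refine Finset.mem_image.2 ⟨insert e z, Finset.mem_filter.2 ⟨hzA, Finset.mem_insert_self e z⟩, ?_⟩
      exact Finset.erase_insert (fun hc => hye (hz hc))
    have hB1dc : ∀ y ∈ B1, ∀ z ⊆ y, z ∈ B1 := by
      intro y hy z hz
      obtain ⟨hyB, hye⟩ := hB1mem y hy
      have hzB : insert e z ∈ B := hBdc _ hyB _ (Finset.insert_subset_insert e hz)
      refine Finset.mem_image.2 ⟨insert e z, Finset.mem_filter.2 ⟨hzB, Finset.mem_insert_self e z⟩, ?_⟩
      exact Finset.erase_insert (fun hc => hye (hz hc))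
    -- nonemptiness of the 0-fibers
    have hemptyA : (∅ : Finset α) ∈ A := by
      obtain ⟨w, hw⟩ := hAne; exact hAdc w hw ∅ (Finset.empty_subset w)
    have hemptyB : (∅ : Finset α) ∈ B := by
      obtain ⟨w, hw⟩ := hBne; exact hBdc w hw ∅ (Finset.empty_subset w)
    have hA0ne : A0.Nonempty := ⟨∅, Finset.mem_filter.2 ⟨hemptyA, by simp⟩⟩
    have hB0ne : B0.Nonempty := ⟨∅, Finset.mem_filter.2 ⟨hemptyB, by simp⟩⟩
    -- measures
    set a0 := fm p s' A0 with ha0def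
    set a1 := fm p s' A1 with ha1def
    set b0 := fm p s' B0 with hb0def
    set b1 := fm p s' B1 with hb1def
    have ha0nn : 0 ≤ a0 := fm_nonneg hp s' A0
    have ha1nn : 0 ≤ a1 := fm_nonneg hp s' A1
    have hb0nn : 0 ≤ b0 := fm_nonneg hp s' B0
    have hb1nn : 0 ≤ b1 := fm_nonneg hp s' B1
    have ha1le : a1 ≤ a0 := fm_mono hp s' hA1A0
    have hb1le : b1 ≤ b0 := fm_mono hp s' hB1B0
    have hfmA : fm p (insert e s') A = (1 - r) * a0 + r * a1 := fm_split he A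
    have hfmB : fm p (insert e s') B = (1 - r) * b0 + r * b1 := fm_split he B
    -- inner sums
    set E00 := ∑ x ∈ s'.powerset, W p s' x * 2 ^ hd A0 B0 x with hE00def
    set E10 := ∑ x ∈ s'.powerset, W p s' x * 2 ^ hd A1 B0 x with hE10def
    set E01 := ∑ x ∈ s'.powerset, W p s' x * 2 ^ hd A0 B1 x with hE01def
    have hE00nn : 0 ≤ E00 :=
      Finset.sum_nonneg fun x _ => mul_nonneg (W_nonneg hp s' x) (two_pow_nonneg _)
    have hE10nn : 0 ≤ E10 :=
      Finset.sum_nonneg fun x _ => mul_nonneg (W_nonneg hp s' x) (two_pow_nonneg _)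
    have hE01nn : 0 ≤ E01 :=
      Finset.sum_nonneg fun x _ => mul_nonneg (W_nonneg hp s' x) (two_pow_nonneg _)
    -- splitting the main sum
    set S1 := ∑ x ∈ s'.powerset, W p s' x * 2 ^ hd A B x with hS1def
    set S2 := ∑ x ∈ s'.powerset, W p s' x * 2 ^ hd A B (insert e x) with hS2def
    have hS1nn : 0 ≤ S1 :=
      Finset.sum_nonneg fun x _ => mul_nonneg (W_nonneg hp s' x) (two_pow_nonneg _)
    have hS2nn : 0 ≤ S2 :=
      Finset.sum_nonneg fun x _ => mul_nonneg (W_nonneg hp s' x) (two_pow_nonneg _)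
    have hsplit : ∑ x ∈ (insert e s').powerset, W p (insert e s') x * 2 ^ hd A B x
        = (1 - r) * S1 + r * S2 := by
      rw [Finset.sum_powerset_insert he]
      congr 1
      · rw [hS1def, Finset.mul_sum]
        refine Finset.sum_congr rfl fun x hx => ?_
        have hex : e ∉ x := fun hc => he (Finset.mem_powerset.1 hx hc)
        rw [W_insert he, if_neg hex]; ring
      · rw [hS2def, Finset.mul_sum]
        refine Finset.sum_congr rfl fun x hx => ?_
        rw [W_insert he, if_pos (Finset.mem_insert_self e x)]
        have hWW : W p s' (insert e x) = W p s' x := W_congr fun e' he' => by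
          have hne : e' ≠ e := fun hc => he (hc ▸ he')
          simp [Finset.mem_insert, hne]
        rw [hWW]; ring
    -- pointwise bounds on hd
    have hH0 : ∀ x : Finset α, hd A B x ≤ hd A0 B0 x := by
      intro x
      obtain ⟨y, hy, z, hz, heq⟩ := hd_exists hA0ne hB0ne x
      rw [heq]
      exact hd_le (hA0A hy) (hB0B hz) x
    have hS1le : S1 ≤ E00 := by
      refine Finset.sum_le_sum fun x _ => ?_
      refine mul_le_mul_of_nonneg_left ?_ (W_nonneg hp s' x)
      exact pow_le_pow_right₀ one_le_two (hH0 x)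
    have hH1 : ∀ x : Finset α, hd A B (insert e x) ≤ hd A0 B0 x + 1 := by
      intro x
      obtain ⟨y, hy, z, hz, heq⟩ := hd_exists hA0ne hB0ne x
      rw [heq]
      calc hd A B (insert e x) ≤ ((insert e x) \ (y ∪ z)).card :=
            hd_le (hA0A hy) (hB0B hz) _
        _ ≤ (insert e (x \ (y ∪ z))).card := by
            apply Finset.card_le_card
            intro t ht
            obtain ⟨ht1, ht2⟩ := Finset.mem_sdiff.1 ht
            rcases Finset.mem_insert.1 ht1 with h | h
            · exact Finset.mem_insert.2 (Or.inl h)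
            · exact Finset.mem_insert_of_mem (Finset.mem_sdiff.2 ⟨h, ht2⟩)
        _ ≤ (x \ (y ∪ z)).card + 1 := Finset.card_insert_le _ _
    have hH2 : A1.Nonempty → ∀ x : Finset α, hd A B (insert e x) ≤ hd A1 B0 x := by
      intro hA1ne x
      obtain ⟨y, hy, z, hz, heq⟩ := hd_exists hA1ne hB0ne x
      rw [heq]
      obtain ⟨hyA, hye⟩ := hA1mem y hy
      calc hd A B (insert e x) ≤ ((insert e x) \ ((insert e y) ∪ z)).card :=
            hd_le hyA (hB0B hz) _
        _ ≤ (x \ (y ∪ z)).card := by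
            apply Finset.card_le_card
            intro t ht
            obtain ⟨ht1, ht2⟩ := Finset.mem_sdiff.1 ht
            have hte : t ≠ e := fun hc => ht2 (Finset.mem_union_left z (hc ▸ Finset.mem_insert_self e y))
            refine Finset.mem_sdiff.2 ⟨(Finset.mem_insert.1 ht1).resolve_left hte, ?_⟩
            intro hc
            rcases Finset.mem_union.1 hc with h | h
            · exact ht2 (Finset.mem_union_left z (Finset.mem_insert_of_mem h))
            · exact ht2 (Finset.mem_union_right _ h)
    have hH3 : B1.Nonempty → ∀ x : Finset α, hd A B (insert e x) ≤ hd A0 B1 x := by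
      intro hB1ne x
      obtain ⟨y, hy, z, hz, heq⟩ := hd_exists hA0ne hB1ne x
      rw [heq]
      obtain ⟨hzB, hze⟩ := hB1mem z hz
      calc hd A B (insert e x) ≤ ((insert e x) \ (y ∪ (insert e z))).card :=
            hd_le (hA0A hy) hzB _
        _ ≤ (x \ (y ∪ z)).card := by
            apply Finset.card_le_card
            intro t ht
            obtain ⟨ht1, ht2⟩ := Finset.mem_sdiff.1 ht
            have hte : t ≠ e := fun hc =>
              ht2 (Finset.mem_union_right y (hc ▸ Finset.mem_insert_self e z))
            refine Finset.mem_sdiff.2 ⟨(Finset.mem_insert.1 ht1).resolve_left hte, ?_⟩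
            intro hc
            rcases Finset.mem_union.1 hc with h | h
            · exact ht2 (Finset.mem_union_left _ h)
            · exact ht2 (Finset.mem_union_right _ (Finset.mem_insert_of_mem h))
    -- induction hypothesis instances
    have IH00 : a0 * b0 * E00 ≤ 1 := ih A0 B0 hA0s hB0s hA0dc hB0dc hA0ne hB0ne
    rw [hfmA, hfmB, hsplit]
    set X := (1 - r) * a0 + r * a1 with hXdef
    set Y := (1 - r) * b0 + r * b1 with hYdef
    have hXnn : 0 ≤ X := by
      rw [hXdef]
      exact add_nonneg (mul_nonneg (by linarith) ha0nn) (mul_nonneg hpe0 ha1nn)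
    have hYnn : 0 ≤ Y := by
      rw [hYdef]
      exact add_nonneg (mul_nonneg (by linarith) hb0nn) (mul_nonneg hpe0 hb1nn)
    -- degenerate cases
    by_cases hA0pos : 0 < a0
    swap
    · have ha00 : a0 = 0 := le_antisymm (not_lt.1 hA0pos) ha0nn
      have ha10 : a1 = 0 := le_antisymm (ha00 ▸ ha1le) ha1nn
      have hX0 : X = 0 := by rw [hXdef, ha00, ha10]; ring
      rw [hX0, zero_mul, zero_mul]
      norm_num
    by_cases hB0pos : 0 < b0
    swap
    · have hb00 : b0 = 0 := le_antisymm (not_lt.1 hB0pos) hb0nn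
      have hb10 : b1 = 0 := le_antisymm (hb00 ▸ hb1le) hb1nn
      have hY0 : Y = 0 := by rw [hYdef, hb00, hb10]; ring
      rw [hY0, mul_zero, zero_mul]
      norm_num
    have hE00le : E00 ≤ 1 / (a0 * b0) := by
      rw [le_div_iff₀ (mul_pos hA0pos hB0pos)]
      calc E00 * (a0 * b0) = a0 * b0 * E00 := by ring
        _ ≤ 1 := IH00
    rcases le_or_gt (2 * a1) a0 with hca | hca
    · rcases le_or_gt (2 * b1) b0 with hcb | hcb
      · -- Case C1 : both fibers light, pay the factor 2
        have hS2le : S2 ≤ 2 * E00 := by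
          have : S2 ≤ ∑ x ∈ s'.powerset, W p s' x * 2 ^ (hd A0 B0 x + 1) := by
            refine Finset.sum_le_sum fun x _ => ?_
            exact mul_le_mul_of_nonneg_left
              (pow_le_pow_right₀ one_le_two (hH1 x)) (W_nonneg hp s' x)
          calc S2 ≤ _ := this
            _ = 2 * E00 := by
              rw [hE00def, Finset.mul_sum]
              refine Finset.sum_congr rfl fun x _ => ?_
              rw [pow_succ]; ring
        calc X * Y * ((1 - r) * S1 + r * S2)
            ≤ X * Y * ((1 + r) * E00) := by
              refine mul_le_mul_of_nonneg_left ?_ (mul_nonneg hXnn hYnn)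
              calc (1 - r) * S1 + r * S2
                  ≤ (1 - r) * E00 + r * (2 * E00) :=
                    add_le_add (mul_le_mul_of_nonneg_left hS1le (by linarith))
                      (mul_le_mul_of_nonneg_left hS2le hpe0)
                _ = (1 + r) * E00 := by ring
          _ = (X * Y * (1 + r)) * E00 := by ring
          _ ≤ (a0 * b0) * E00 :=
              mul_le_mul_of_nonneg_right (scalar1 hpe0 hpe1 ha1nn hb1nn hca hcb) hE00nn
          _ = a0 * b0 * E00 := by ring
          _ ≤ 1 := IH00
      · -- Case C3 with b-side heavy (since 2a1 ≤ a0 < ... and b0 < 2b1)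
        have hwb : a1 * b0 ≤ a0 * b1 := by
          have h1 : (2 * a1) * b0 ≤ a0 * b0 := mul_le_mul_of_nonneg_right hca hb0nn
          have h2 : a0 * b0 ≤ a0 * (2 * b1) := mul_le_mul_of_nonneg_left hcb.le ha0nn
          linarith [h1, h2]
        have hb1pos : 0 < b1 := by linarith
        have hB1ne : B1.Nonempty := by
          rw [Finset.nonempty_iff_ne_empty]
          intro hc
          rw [hb1def, hc] at hb1pos
          simp [fm] at hb1pos
        have IH01 : a0 * b1 * E01 ≤ 1 := ih A0 B1 hA0s hB1s hA0dc hB1dc hA0ne hB1ne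
        have hE01le : E01 ≤ 1 / (a0 * b1) := by
          rw [le_div_iff₀ (mul_pos hA0pos hb1pos)]
          calc E01 * (a0 * b1) = a0 * b1 * E01 := by ring
            _ ≤ 1 := IH01
        have hS2le : S2 ≤ E01 := by
          refine Finset.sum_le_sum fun x _ => ?_
          exact mul_le_mul_of_nonneg_left
            (pow_le_pow_right₀ one_le_two (hH3 hB1ne x)) (W_nonneg hp s' x)
        -- final arithmetic
        set T := (1 - r) * b1 + r * b0 with hTdef
        have hTnn : 0 ≤ T := by
          rw [hTdef]
          exact add_nonneg (mul_nonneg (by linarith) hb1nn) (mul_nonneg hpe0 hb0nn)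
        have hab : X * b0 ≤ Y * a0 := by
          rw [hXdef, hYdef]
          linarith [mul_le_mul_of_nonneg_left hwb hpe0]
        have hs2b : Y ^ 2 * T ≤ b0 ^ 2 * b1 := scalar2 hpe0 hpe1 hb1nn hb1le hcb.le
        have hkey : X * Y * T ≤ a0 * b0 * b1 := by
          have h1 : (X * Y * T) * b0 ≤ (a0 * b0 * b1) * b0 := by
            calc (X * Y * T) * b0 = (Y * T) * (X * b0) := by ring
              _ ≤ (Y * T) * (Y * a0) :=
                  mul_le_mul_of_nonneg_left hab (mul_nonneg hYnn hTnn)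
              _ = (Y ^ 2 * T) * a0 := by ring
              _ ≤ (b0 ^ 2 * b1) * a0 := mul_le_mul_of_nonneg_right hs2b ha0nn
              _ = (a0 * b0 * b1) * b0 := by ring
          exact le_of_mul_le_mul_right h1 hB0pos
        have hposd : 0 < a0 * b0 * b1 := mul_pos (mul_pos hA0pos hB0pos) hb1pos
        calc X * Y * ((1 - r) * S1 + r * S2)
            ≤ X * Y * ((1 - r) * (1 / (a0 * b0)) + r * (1 / (a0 * b1))) := by
              refine mul_le_mul_of_nonneg_left ?_ (mul_nonneg hXnn hYnn)
              exact add_le_add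
                (mul_le_mul_of_nonneg_left (hS1le.trans hE00le) (by linarith))
                (mul_le_mul_of_nonneg_left (hS2le.trans hE01le) hpe0)
          _ = (X * Y * T) / (a0 * b0 * b1) := by
              rw [hTdef]; field_simp
          _ ≤ 1 := by
              rw [div_le_one hposd]
              exact hkey
    · -- 2a1 > a0
      rcases le_or_gt (a0 * b1) (a1 * b0) with hwa | hwa
      · -- Case C2 : a-side heavy
        have ha1pos : 0 < a1 := by linarith
        have hA1ne : A1.Nonempty := by
          rw [Finset.nonempty_iff_ne_empty]
          intro hc
          rw [ha1def, hc] at ha1pos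
          simp [fm] at ha1pos
        have IH10 : a1 * b0 * E10 ≤ 1 := ih A1 B0 hA1s hB0s hA1dc hB0dc hA1ne hB0ne
        have hE10le : E10 ≤ 1 / (a1 * b0) := by
          rw [le_div_iff₀ (mul_pos ha1pos hB0pos)]
          calc E10 * (a1 * b0) = a1 * b0 * E10 := by ring
            _ ≤ 1 := IH10
        have hS2le : S2 ≤ E10 := by
          refine Finset.sum_le_sum fun x _ => ?_
          exact mul_le_mul_of_nonneg_left
            (pow_le_pow_right₀ one_le_two (hH2 hA1ne x)) (W_nonneg hp s' x)
        set T := (1 - r) * a1 + r * a0 with hTdef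
        have hTnn : 0 ≤ T := by
          rw [hTdef]
          exact add_nonneg (mul_nonneg (by linarith) ha1nn) (mul_nonneg hpe0 ha0nn)
        have hab : Y * a0 ≤ X * b0 := by
          rw [hXdef, hYdef]
          linarith [mul_le_mul_of_nonneg_left hwa hpe0]
        have hs2a : X ^ 2 * T ≤ a0 ^ 2 * a1 := scalar2 hpe0 hpe1 ha1nn ha1le hca.le
        have hkey : X * Y * T ≤ a0 * a1 * b0 := by
          have h1 : (X * Y * T) * a0 ≤ (a0 * a1 * b0) * a0 := by
            calc (X * Y * T) * a0 = (X * T) * (Y * a0) := by ring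
              _ ≤ (X * T) * (X * b0) :=
                  mul_le_mul_of_nonneg_left hab (mul_nonneg hXnn hTnn)
              _ = (X ^ 2 * T) * b0 := by ring
              _ ≤ (a0 ^ 2 * a1) * b0 := mul_le_mul_of_nonneg_right hs2a hb0nn
              _ = (a0 * a1 * b0) * a0 := by ring
          exact le_of_mul_le_mul_right h1 hA0pos
        have hposd : 0 < a0 * a1 * b0 := mul_pos (mul_pos hA0pos ha1pos) hB0pos
        calc X * Y * ((1 - r) * S1 + r * S2)
            ≤ X * Y * ((1 - r) * (1 / (a0 * b0)) + r * (1 / (a1 * b0))) := by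
              refine mul_le_mul_of_nonneg_left ?_ (mul_nonneg hXnn hYnn)
              exact add_le_add
                (mul_le_mul_of_nonneg_left (hS1le.trans hE00le) (by linarith))
                (mul_le_mul_of_nonneg_left (hS2le.trans hE10le) hpe0)
          _ = (X * Y * T) / (a0 * a1 * b0) := by
              rw [hTdef]; field_simp
          _ ≤ 1 := by
              rw [div_le_one hposd]
              exact hkey
      · -- Case C3 again : b-side heavy (a1*b0 < a0*b1 and a0 < 2a1)
        have ha1pos : 0 < a1 := by linarith
        have h0ab : 0 < a0 * b1 := lt_of_le_of_lt (mul_nonneg ha1nn hb0nn) hwa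
        have hb1pos : 0 < b1 := by
          rcases mul_pos_iff.1 h0ab with ⟨_, h⟩ | ⟨h, _⟩
          · exact h
          · linarith
        have hcb2 : b0 ≤ 2 * b1 := by
          have h1 : a0 * b1 ≤ (2 * a1) * b1 := mul_le_mul_of_nonneg_right hca.le hb1nn
          have h2 : a1 * b0 ≤ a1 * (2 * b1) := by linarith [hwa.le, h1]
          exact le_of_mul_le_mul_left h2 ha1pos
        have hwb : a1 * b0 ≤ a0 * b1 := hwa.le
        have hB1ne : B1.Nonempty := by
          rw [Finset.nonempty_iff_ne_empty]
          intro hc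
          rw [hb1def, hc] at hb1pos
          simp [fm] at hb1pos
        have IH01 : a0 * b1 * E01 ≤ 1 := ih A0 B1 hA0s hB1s hA0dc hB1dc hA0ne hB1ne
        have hE01le : E01 ≤ 1 / (a0 * b1) := by
          rw [le_div_iff₀ (mul_pos hA0pos hb1pos)]
          calc E01 * (a0 * b1) = a0 * b1 * E01 := by ring
            _ ≤ 1 := IH01
        have hS2le : S2 ≤ E01 := by
          refine Finset.sum_le_sum fun x _ => ?_
          exact mul_le_mul_of_nonneg_left
            (pow_le_pow_right₀ one_le_two (hH3 hB1ne x)) (W_nonneg hp s' x)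
        set T := (1 - r) * b1 + r * b0 with hTdef
        have hTnn : 0 ≤ T := by
          rw [hTdef]
          exact add_nonneg (mul_nonneg (by linarith) hb1nn) (mul_nonneg hpe0 hb0nn)
        have hab : X * b0 ≤ Y * a0 := by
          rw [hXdef, hYdef]
          linarith [mul_le_mul_of_nonneg_left hwb hpe0]
        have hs2b : Y ^ 2 * T ≤ b0 ^ 2 * b1 := scalar2 hpe0 hpe1 hb1nn hb1le hcb2
        have hkey : X * Y * T ≤ a0 * b0 * b1 := by
          have h1 : (X * Y * T) * b0 ≤ (a0 * b0 * b1) * b0 := by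
            calc (X * Y * T) * b0 = (Y * T) * (X * b0) := by ring
              _ ≤ (Y * T) * (Y * a0) :=
                  mul_le_mul_of_nonneg_left hab (mul_nonneg hYnn hTnn)
              _ = (Y ^ 2 * T) * a0 := by ring
              _ ≤ (b0 ^ 2 * b1) * a0 := mul_le_mul_of_nonneg_right hs2b ha0nn
              _ = (a0 * b0 * b1) * b0 := by ring
          exact le_of_mul_le_mul_right h1 hB0pos
        have hposd : 0 < a0 * b0 * b1 := mul_pos (mul_pos hA0pos hB0pos) hb1pos
        calc X * Y * ((1 - r) * S1 + r * S2)
            ≤ X * Y * ((1 - r) * (1 / (a0 * b0)) + r * (1 / (a0 * b1))) := by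
              refine mul_le_mul_of_nonneg_left ?_ (mul_nonneg hXnn hYnn)
              exact add_le_add
                (mul_le_mul_of_nonneg_left (hS1le.trans hE00le) (by linarith))
                (mul_le_mul_of_nonneg_left (hS2le.trans hE01le) hpe0)
          _ = (X * Y * T) / (a0 * b0 * b1) := by
              rw [hTdef]; field_simp
          _ ≤ 1 := by
              rw [div_le_one hposd]
              exact hkey

/-- Key numeric fact: `k ≤ (3/4)·1[k≥1] + (1/2)·1[k≥2] + (2^k - 1)/4`. -/
lemma nat_le_G (k : ℕ) :
    (k : ℝ) ≤ 3 / 4 * (if 1 ≤ k then (1:ℝ) else 0) + 1 / 2 * (if 2 ≤ k then (1:ℝ) else 0)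
      + ((2:ℝ) ^ k - 1) / 4 := by
  match k with
  | 0 => norm_num
  | 1 => norm_num
  | 2 => norm_num
  | (n + 3) =>
    rw [if_pos (by omega : 1 ≤ n + 3), if_pos (by omega : 2 ≤ n + 3)]
    have hn : (n : ℝ) + 1 ≤ 2 ^ n := by
      exact_mod_cast Nat.succ_le_of_lt (Nat.lt_two_pow_self (n := n))
    have h8 : (2:ℝ) ^ (n + 3) = 8 * 2 ^ n := by ring
    push_cast
    rw [h8]
    nlinarith
end StmtAux


open StmtAux

/-- Proposition: for monotone subadditive `v` with `v ∅ = 0` and all singletons of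
value at most `b`, if `M` is a median of `v(S')` for the random subset `S'`, then
`E[v(S')] ≤ (3/2)·M + (11/8)·b`. -/
theorem stmt1 {α : Type*} [Fintype α] [DecidableEq α]
    (v : Finset α → ℝ)
    (hmono : ∀ A B : Finset α, A ⊆ B → v A ≤ v B)
    (hsub : ∀ A B : Finset α, v (A ∪ B) ≤ v A + v B)
    (h0 : v ∅ = 0)
    (b : ℝ) (hb : 0 ≤ b) (hbe : ∀ e : α, v {e} ≤ b)
    (p : α → ℝ) (hp : ∀ e, 0 ≤ p e ∧ p e ≤ 1)
    (M : ℝ)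
    (hM1 : 1 / 2 ≤ prEvent p (fun T => v T ≤ M))
    (hM2 : 1 / 2 ≤ prEvent p (fun T => M ≤ v T)) :
    expVal p v ≤ 3 / 2 * M + 11 / 8 * b := by
  classical
  have hwt : ∀ T : Finset α, 0 ≤ subsetWt p T := fun T => W_nonneg hp Finset.univ T
  have htot : ∑ T : Finset α, subsetWt p T = 1 := by
    have h := sumW p (Finset.univ : Finset α)
    rwa [Finset.powerset_univ] at h
  have hv0 : ∀ T : Finset α, 0 ≤ v T := fun T => by
    have := hmono ∅ T (Finset.empty_subset T); rw [h0] at this; exact this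
  have hM0 : 0 ≤ M := by
    by_contra hM
    push_neg at hM
    have hz : prEvent p (fun T => v T ≤ M) = 0 := by
      rw [prEvent]
      refine Finset.sum_eq_zero fun T _ => ?_
      rw [if_neg]
      intro hc
      linarith [hv0 T]
    rw [hz] at hM1
    linarith
  -- the down-set family of small sets
  set Af := (Finset.univ : Finset (Finset α)).filter (fun T => v T ≤ M) with hAfdef
  have hAfne : Af.Nonempty := ⟨∅, Finset.mem_filter.2 ⟨Finset.mem_univ _, by rw [h0]; exact hM0⟩⟩
  have hAfdc : ∀ y ∈ Af, ∀ z ⊆ y, z ∈ Af := by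
    intro y hy z hz
    exact Finset.mem_filter.2 ⟨Finset.mem_univ _,
      le_trans (hmono z y hz) (Finset.mem_filter.1 hy).2⟩
  have hAfs : ∀ y ∈ Af, y ⊆ (Finset.univ : Finset α) := fun y _ => Finset.subset_univ y
  have hWsub : ∀ T : Finset α, W p Finset.univ T = subsetWt p T := fun T => rfl
  set μ := fm p Finset.univ Af with hμdef
  have hμeq : μ = prEvent p (fun T => v T ≤ M) := by
    rw [hμdef, hAfdef, fm, prEvent, Finset.sum_filter]
    exact Finset.sum_congr rfl fun T _ => by rw [hWsub]
  have hμhalf : 1 / 2 ≤ μ := hμeq ▸ hM1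
  set H := ∑ T : Finset α, subsetWt p T * 2 ^ hd Af Af T with hHdef
  have hHnn : 0 ≤ H :=
    Finset.sum_nonneg fun T _ => mul_nonneg (hwt T) (two_pow_nonneg _)
  have hH4 : H ≤ 4 := by
    have htal := tal p hp Finset.univ Af Af hAfs hAfs hAfdc hAfdc hAfne hAfne
    rw [Finset.powerset_univ] at htal
    have hHeq : ∑ x ∈ (Finset.univ : Finset (Finset α)),
        W p Finset.univ x * 2 ^ hd Af Af x = H := rfl
    rw [hHeq] at htal
    nlinarith [mul_nonneg (mul_nonneg (sub_nonneg.2 hμhalf)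
      (by linarith : (0:ℝ) ≤ μ + 1/2)) hHnn]
  -- the cover bound
  have hcard : ∀ S : Finset α, v S ≤ b * S.card := by
    intro S
    induction S using Finset.induction_on with
    | empty => simp [h0]
    | @insert a S ha ihS =>
      have h1 : v (insert a S) ≤ v {a} + v S := by
        rw [Finset.insert_eq]; exact hsub {a} S
      have h2 : ((insert a S).card : ℝ) = S.card + 1 := by
        rw [Finset.card_insert_of_notMem ha]; push_cast; ring
      calc v (insert a S) ≤ v {a} + v S := h1
        _ ≤ b + b * S.card := add_le_add (hbe a) ihS
        _ = b * (S.card + 1) := by ring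
        _ = b * (insert a S).card := by rw [h2]
  have hcov : ∀ T : Finset α, v T ≤ M + M + b * hd Af Af T := by
    intro T
    obtain ⟨y, hy, z, hz, heq⟩ := hd_exists hAfne hAfne T
    have hvy : v y ≤ M := (Finset.mem_filter.1 hy).2
    have hvz : v z ≤ M := (Finset.mem_filter.1 hz).2
    have hun : T ∩ (y ∪ z) ∪ T \ (y ∪ z) = T := by
      rw [Finset.union_comm]
      exact Finset.sdiff_union_inter T (y ∪ z)
    have hstep1 : v T ≤ v (T ∩ (y ∪ z)) + v (T \ (y ∪ z)) := by
      conv_lhs => rw [← hun]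
      exact hsub _ _
    have hstep2 : v (T ∩ (y ∪ z)) ≤ v (T ∩ y) + v (T ∩ z) := by
      rw [Finset.inter_union_distrib_left]
      exact hsub _ _
    have hy' : v (T ∩ y) ≤ M := le_trans (hmono _ y Finset.inter_subset_right) hvy
    have hz' : v (T ∩ z) ≤ M := le_trans (hmono _ z Finset.inter_subset_right) hvz
    have hrest : v (T \ (y ∪ z)) ≤ b * hd Af Af T := by
      rw [heq]
      exact hcard _
    linarith
  -- pointwise master inequality
  have hmaster : ∀ T : Finset α,
      v T ≤ M + M * (if v T ≤ M then (0:ℝ) else 1)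
        + b * (3 / 4 * (if 1 ≤ hd Af Af T then (1:ℝ) else 0)
          + 1 / 2 * (if 2 ≤ hd Af Af T then (1:ℝ) else 0)
          + ((2:ℝ) ^ hd Af Af T - 1) / 4) := by
    intro T
    have hG0 : 0 ≤ 3 / 4 * (if 1 ≤ hd Af Af T then (1:ℝ) else 0)
        + 1 / 2 * (if 2 ≤ hd Af Af T then (1:ℝ) else 0)
        + ((2:ℝ) ^ hd Af Af T - 1) / 4 := by
      have h1 : (1:ℝ) ≤ 2 ^ hd Af Af T := one_le_pow₀ one_le_two
      split_ifs <;> norm_num <;> linarith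
    by_cases hvT : v T ≤ M
    · rw [if_pos hvT]
      have h2 := mul_nonneg hb hG0
      linarith
    · rw [if_neg hvT]
      have hGk := nat_le_G (hd Af Af T)
      have h2 : b * (hd Af Af T : ℝ) ≤ b * (3 / 4 * (if 1 ≤ hd Af Af T then (1:ℝ) else 0)
          + 1 / 2 * (if 2 ≤ hd Af Af T then (1:ℝ) else 0)
          + ((2:ℝ) ^ hd Af Af T - 1) / 4) :=
        mul_le_mul_of_nonneg_left hGk hb
      linarith [hcov T]
  -- sums of indicators
  set Q := ∑ T : Finset α, subsetWt p T * (if v T ≤ M then (0:ℝ) else 1) with hQdef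
  set P1 := ∑ T : Finset α, subsetWt p T * (if 1 ≤ hd Af Af T then (1:ℝ) else 0) with hP1def
  set P2 := ∑ T : Finset α, subsetWt p T * (if 2 ≤ hd Af Af T then (1:ℝ) else 0) with hP2def
  have hQle : Q ≤ 1 / 2 := by
    have hsum : Q + μ = ∑ T : Finset α, subsetWt p T := by
      rw [hQdef, hμdef, hAfdef, fm, Finset.sum_filter, ← Finset.sum_add_distrib]
      refine Finset.sum_congr rfl fun T _ => ?_
      rw [hWsub]
      by_cases hvT : v T ≤ M
      · rw [if_pos hvT, if_pos hvT]; ring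
      · rw [if_neg hvT, if_neg hvT]; ring
    rw [htot] at hsum
    linarith
  have hmem0 : ∀ T : Finset α, v T ≤ M → hd Af Af T = 0 := by
    intro T hvT
    have hT : T ∈ Af := Finset.mem_filter.2 ⟨Finset.mem_univ _, hvT⟩
    have h1 := hd_le hT hT T
    simp only [Finset.union_self, Finset.sdiff_self, Finset.card_empty] at h1
    omega
  have hP1Q : P1 ≤ Q := by
    refine Finset.sum_le_sum fun T _ => ?_
    refine mul_le_mul_of_nonneg_left ?_ (hwt T)
    by_cases hvT : v T ≤ M
    · rw [if_neg (by rw [hmem0 T hvT]; omega : ¬ 1 ≤ hd Af Af T), if_pos hvT]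
    · rw [if_neg hvT]
      split_ifs <;> norm_num
  have hP2Q : P2 ≤ Q := by
    refine Finset.sum_le_sum fun T _ => ?_
    refine mul_le_mul_of_nonneg_left ?_ (hwt T)
    by_cases hvT : v T ≤ M
    · rw [if_neg (by rw [hmem0 T hvT]; omega : ¬ 2 ≤ hd Af Af T), if_pos hvT]
    · rw [if_neg hvT]
      split_ifs <;> norm_num
  -- put everything together
  have hstep : expVal p v ≤ ∑ T : Finset α, subsetWt p T *
      (M + M * (if v T ≤ M then (0:ℝ) else 1)
        + b * (3 / 4 * (if 1 ≤ hd Af Af T then (1:ℝ) else 0)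
          + 1 / 2 * (if 2 ≤ hd Af Af T then (1:ℝ) else 0)
          + ((2:ℝ) ^ hd Af Af T - 1) / 4)) := by
    rw [expVal]
    exact Finset.sum_le_sum fun T _ => mul_le_mul_of_nonneg_left (hmaster T) (hwt T)
  have hexpand : ∑ T : Finset α, subsetWt p T *
      (M + M * (if v T ≤ M then (0:ℝ) else 1)
        + b * (3 / 4 * (if 1 ≤ hd Af Af T then (1:ℝ) else 0)
          + 1 / 2 * (if 2 ≤ hd Af Af T then (1:ℝ) else 0)
          + ((2:ℝ) ^ hd Af Af T - 1) / 4))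
      = M * (∑ T : Finset α, subsetWt p T) + M * Q
        + b * (3 / 4 * P1 + 1 / 2 * P2
          + (H - (∑ T : Finset α, subsetWt p T)) / 4) := by
    rw [hQdef, hP1def, hP2def, hHdef]
    simp only [Finset.mul_sum, ← Finset.sum_sub_distrib, Finset.sum_div,
      ← Finset.sum_add_distrib]
    exact Finset.sum_congr rfl fun T _ => by ring
  have hmain : expVal p v ≤ M + M * Q + b * (3 / 4 * P1 + 1 / 2 * P2 + (H - 1) / 4) := by
    have := le_trans hstep (le_of_eq hexpand)
    rwa [htot, mul_one] at this
  have hfinal2 : 3 / 4 * P1 + 1 / 2 * P2 + (H - 1) / 4 ≤ 11 / 8 := by linarith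
  have hfinal1 : M * Q ≤ M * (1 / 2) := mul_le_mul_of_nonneg_left hQle hM0
  have hfinal2' : b * (3 / 4 * P1 + 1 / 2 * P2 + (H - 1) / 4) ≤ b * (11 / 8) :=
    mul_le_mul_of_nonneg_left hfinal2 hb
  calc expVal p v ≤ M + M * Q + b * (3 / 4 * P1 + 1 / 2 * P2 + (H - 1) / 4) := hmain
    _ ≤ M + M * (1 / 2) + b * (11 / 8) := by linarith
    _ = 3 / 2 * M + 11 / 8 * b := by ring
end

section
/- Let f : {0,1}^n → ℝ be monotone and subadditive with f(0) = 0, and suppose |f(x) − f(y)| ≤ b · h(x, y) for all x, y ∈ {0,1}^n, where h(x, y) = |{i : x_i ≠ y_i}| and b ≥ 0. Let x be drawn from a product probability measure on {0,1}^n (coordinates independent). Then for all reals c_1, …, c_q > 0, every natural number k, and every positive integer q, Pr[f(x) > (c_1 + ⋯ + c_q) + k·b] ≤ q^{−k−1} / ∏_{i=1}^{q} Pr[f(x) ≤ c_i], provided each Pr[f(x) ≤ c_i] > 0. -/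
open scoped Classical

/-- Probability weight of the point `x ∈ {0,1}ⁿ` under the product measure in which
coordinate `i` equals `true` with probability `w i`, independently. -/
noncomputable def cubeWt {n : ℕ} (w : Fin n → ℝ) (x : Fin n → Bool) : ℝ :=
  ∏ i : Fin n, if x i then w i else 1 - w i

/-- Probability of the event `E` under the product measure given by `w`. -/
noncomputable def cubePr {n : ℕ} (w : Fin n → ℝ) (E : (Fin n → Bool) → Prop) : ℝ :=
  ∑ x : Fin n → Bool, if E x then cubeWt w x else 0

/-- Expectation of `f` under the product measure given by `w`. -/
noncomputable def cubeExp {n : ℕ} (w : Fin n → ℝ) (f : (Fin n → Bool) → ℝ) : ℝ :=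
  ∑ x : Fin n → Bool, cubeWt w x * f x

/-- Hamming distance between two points of `{0,1}ⁿ`. -/
def hamm {n : ℕ} (x y : Fin n → Bool) : ℕ :=
  (Finset.univ.filter fun i => x i ≠ y i).card

/-- Talagrand's distance `h(x; y¹, …, y^q) = |{i : x i ∉ {y¹ i, …, y^q i}}|`. -/
def hTup {n q : ℕ} (x : Fin n → Bool) (y : Fin q → Fin n → Bool) : ℕ :=
  (Finset.univ.filter fun i => ∀ j, x i ≠ y j i).card

/-- Talagrand's distance from `x` to the sets `A 1, …, A q`:
`h(x; A₁, …, A_q) = min { h(x; y¹, …, y^q) : y¹ ∈ A₁, …, y^q ∈ A_q }`. -/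
noncomputable def hSet {n q : ℕ} (x : Fin n → Bool)
    (A : Fin q → Set (Fin n → Bool)) : ℕ :=
  sInf {k | ∃ y : Fin q → Fin n → Bool, (∀ j, y j ∈ A j) ∧ hTup x y = k}

section basic
variable {n q : ℕ}

lemma cubeWt_nonneg {w : Fin n → ℝ} (hw : ∀ i, 0 ≤ w i ∧ w i ≤ 1) (x : Fin n → Bool) :
    0 ≤ cubeWt w x :=
  Finset.prod_nonneg fun i _ => by
    rcases hw i with ⟨h1, h2⟩; split <;> linarith

lemma cubePr_nonneg {w : Fin n → ℝ} (hw : ∀ i, 0 ≤ w i ∧ w i ≤ 1)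
    (E : (Fin n → Bool) → Prop) : 0 ≤ cubePr w E :=
  Finset.sum_nonneg fun x _ => by
    split
    · exact cubeWt_nonneg hw x
    · exact le_refl 0

lemma cubePr_mono {w : Fin n → ℝ} (hw : ∀ i, 0 ≤ w i ∧ w i ≤ 1)
    {E F : (Fin n → Bool) → Prop} (h : ∀ x, E x → F x) :
    cubePr w E ≤ cubePr w F := by
  apply Finset.sum_le_sum
  intro x _
  by_cases hx : E x
  · rw [if_pos hx, if_pos (h x hx)]
  · rw [if_neg hx]
    split
    · exact cubeWt_nonneg hw x
    · exact le_refl 0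

lemma cubePr_pos_nonempty {w : Fin n → ℝ} {E : (Fin n → Bool) → Prop}
    (h : 0 < cubePr w E) : ∃ x, E x := by
  by_contra hne
  push_neg at hne
  have : cubePr w E = 0 := Finset.sum_eq_zero fun x _ => if_neg (hne x)
  rw [this] at h; exact lt_irrefl 0 h

lemma hSet_le {x : Fin n → Bool} {A : Fin q → Set (Fin n → Bool)}
    {y : Fin q → Fin n → Bool} (hy : ∀ j, y j ∈ A j) : hSet x A ≤ hTup x y :=
  Nat.sInf_le ⟨y, hy, rfl⟩

lemma hSet_spec {x : Fin n → Bool} {A : Fin q → Set (Fin n → Bool)}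
    (hA : ∀ j, (A j).Nonempty) :
    ∃ y : Fin q → Fin n → Bool, (∀ j, y j ∈ A j) ∧ hTup x y = hSet x A :=
  Nat.sInf_mem (⟨hTup x (fun j => (hA j).choose),
    (fun j => (hA j).choose), fun j => (hA j).choose_spec, rfl⟩ :
    Set.Nonempty {k | ∃ y : Fin q → Fin n → Bool, (∀ j, y j ∈ A j) ∧ hTup x y = k})

end basic

lemma bern (q : ℕ) (m : ℝ) (h0 : 0 < m) (h1 : m ≤ 1) :
    ((q : ℝ) + 1 - q * m) * m ^ q ≤ 1 := by
  have e : 1 + (1 - m) / m = 1 / m := by field_simp; ring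
  have hnn : (0:ℝ) ≤ (1 - m) / m := div_nonneg (by linarith) h0.le
  have h2 : 1 + (q : ℝ) * ((1 - m) / m) ≤ (1 / m) ^ q := by
    rw [← e]; exact one_add_mul_le_pow (by linarith) q
  have h3 : (q : ℝ) + 1 - q * m ≤ 1 + (q : ℝ) * ((1 - m) / m) := by
    have hd : (1 - m) ≤ (1 - m) / m := by
      rw [le_div_iff₀ h0]; nlinarith
    nlinarith [mul_le_mul_of_nonneg_left hd (Nat.cast_nonneg q : (0:ℝ) ≤ q)]
  calc ((q : ℝ) + 1 - q * m) * m ^ q ≤ (1 / m) ^ q * m ^ q :=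
        mul_le_mul_of_nonneg_right (h3.trans h2) (pow_nonneg h0.le q)
    _ = 1 := by
        rw [one_div, inv_pow, inv_mul_cancel₀ (pow_ne_zero q h0.ne')]

section det
variable {n q : ℕ} {f : (Fin n → Bool) → ℝ}

lemma f_sup_le (hsub : ∀ x y : Fin n → Bool, f (fun i => x i || y i) ≤ f x + f y)
    (h0 : f (fun _ => false) = 0)
    (v : Fin q → Fin n → Bool) (s : Finset (Fin q)) :
    f (fun i => s.sup fun j => v j i) ≤ ∑ j ∈ s, f (v j) := by
  induction s using Finset.induction with
  | empty => simp [h0, show ((⊥:Bool) = false) from rfl]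
  | @insert a s ha ih =>
    have he : (fun i => (insert a s).sup fun j => v j i)
        = fun i => v a i || s.sup fun j => v j i := by
      funext i; rw [Finset.sup_insert]; rfl
    rw [he, Finset.sum_insert ha]
    calc f (fun i => v a i || s.sup fun j => v j i) ≤ f (v a) + f (fun i => s.sup fun j => v j i) :=
          hsub _ _
      _ ≤ f (v a) + ∑ j ∈ s, f (v j) := by linarith

lemma det_lemma
    (hmono : ∀ x y : Fin n → Bool, (∀ i, x i = true → y i = true) → f x ≤ f y)
    (hsub : ∀ x y : Fin n → Bool, f (fun i => x i || y i) ≤ f x + f y)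
    (h0 : f (fun _ => false) = 0)
    {b : ℝ} (hb : 0 ≤ b)
    (hlip : ∀ x y : Fin n → Bool, |f x - f y| ≤ b * hamm x y)
    (c : Fin q → ℝ) (k : ℕ)
    {x : Fin n → Bool} {y : Fin q → Fin n → Bool}
    (hy : ∀ j, f (y j) ≤ c j) (hfx : (∑ j, c j) + k * b < f x) :
    k + 1 ≤ hTup x y := by
  by_contra hcon
  push_neg at hcon
  have hk : hTup x y ≤ k := Nat.lt_succ_iff.mp hcon
  set u : Fin n → Bool := fun i => x i && (Finset.univ.sup fun j => y j i) with hu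
  -- f x ≤ f u + b * hamm x u
  have h1 : f x ≤ f u + b * hamm x u := by
    have := (abs_le.mp (hlip x u)).2
    have hle : f x - f u ≤ b * hamm x u := le_trans (le_abs_self _) (hlip x u)
    linarith
  -- hamm x u ≤ hTup x y
  have h2 : hamm x u ≤ hTup x y := by
    apply Finset.card_le_card
    intro i hi
    rw [Finset.mem_filter] at hi ⊢
    refine ⟨Finset.mem_univ i, ?_⟩
    have hne := hi.2
    intro j
    cases hxi : x i with
    | false =>
      exfalso; apply hne; rw [hu]; simp [hxi]
    | true =>
      have husup : (Finset.univ.sup fun j => y j i) = false := by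
        cases hs : (Finset.univ.sup fun j => y j i) with
        | false => rfl
        | true => exact absurd (by rw [hu]; simp [hxi, hs]) hne
      have : ∀ j' ∈ (Finset.univ : Finset (Fin q)), y j' i = false := by
        rw [show (false : Bool) = ⊥ from rfl, Finset.sup_eq_bot_iff] at husup
        exact husup
      rw [this j (Finset.mem_univ j)]
      exact Bool.noConfusion
  -- f u ≤ ∑ c
  have h3 : f u ≤ ∑ j, c j := by
    have he : u = fun i => Finset.univ.sup fun j => (x i && y j i) := by
      funext i
      cases hxi : x i with
      | false =>
        simp only [hu, hxi, Bool.false_and]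
        symm
        apply le_bot_iff.mp
        apply Finset.sup_le
        intro j _
        exact le_refl _
      | true => simp [hu, hxi]
    have := f_sup_le hsub h0 (fun j => fun i => x i && y j i) Finset.univ
    rw [← he] at this
    refine le_trans this ?_
    apply Finset.sum_le_sum
    intro j _
    refine le_trans (hmono _ (y j) ?_) (hy j)
    intro i hi
    exact (Bool.and_eq_true _ _ |>.mp hi).2
  have h4 : (hamm x u : ℝ) ≤ k := by
    exact_mod_cast le_trans (Nat.cast_le.mpr (le_trans h2 hk)) le_rfl
  have : f x ≤ (∑ j, c j) + b * k := by
    have hbk : b * hamm x u ≤ b * k := mul_le_mul_of_nonneg_left h4 hb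
    linarith
  linarith [this, hfx]

end det

lemma talagrand (q : ℕ) (hq : 0 < q) :
    ∀ (n : ℕ) (w : Fin n → ℝ), (∀ i, 0 ≤ w i ∧ w i ≤ 1) →
      ∀ (A : Fin q → Set (Fin n → Bool)), (∀ j, (A j).Nonempty) →
      (∑ x, cubeWt w x * (q : ℝ) ^ (hSet x A)) * (∏ j, cubePr w (· ∈ A j)) ≤ 1 := by
  intro n
  induction n with
  | zero =>
    intro w hw A hA
    have h1 : ∀ x : Fin 0 → Bool, hSet x A = 0 := by
      intro x
      have hle := hSet_le (x := x) (y := fun j => (hA j).choose) (fun j => (hA j).choose_spec)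
      have h2 : hTup x (fun j => (hA j).choose) = 0 := by
        unfold hTup; simp
      omega
    have h2 : ∀ j, cubePr w (· ∈ A j) = 1 := by
      intro j
      unfold cubePr
      rw [Fintype.sum_unique]
      beta_reduce
      split
      · unfold cubeWt; simp
      · next hcon =>
          exfalso; apply hcon
          obtain ⟨a, ha⟩ := hA j
          exact Set.mem_of_eq_of_mem (Subsingleton.elim _ a) ha
    rw [Finset.prod_congr rfl (fun j _ => h2 j), Finset.prod_const_one, mul_one]
    rw [Fintype.sum_unique, h1, pow_zero, mul_one]
    unfold cubeWt; simp
  | succ n ih =>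
    intro w hw A hA
    have hq1 : (1:ℝ) ≤ (q:ℝ) := by exact_mod_cast hq
    set p := w 0 with hp
    have hp0 : 0 ≤ p := (hw 0).1
    have hp1 : p ≤ 1 := (hw 0).2
    set w' : Fin n → ℝ := fun i => w i.succ with hw'def
    have hw' : ∀ i, 0 ≤ w' i ∧ w' i ≤ 1 := fun i => hw i.succ
    set sec : Bool → Fin q → Set (Fin n → Bool) := fun ω j => {z | Fin.cons ω z ∈ A j} with hsec
    set B : Fin q → Set (Fin n → Bool) := fun j => sec true j ∪ sec false j with hBdef
    have hBne : ∀ j, (B j).Nonempty := by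
      intro j
      obtain ⟨a, ha⟩ := hA j
      refine ⟨Fin.tail a, ?_⟩
      have hc : Fin.cons (a 0) (Fin.tail a) = a := Fin.cons_self_tail a
      cases h0 : a 0 with
      | true =>
        left; show Fin.cons true (Fin.tail a) ∈ A j; rw [← h0, hc]; exact ha
      | false =>
        right; show Fin.cons false (Fin.tail a) ∈ A j; rw [← h0, hc]; exact ha
    have hsum : ∀ F : (Fin (n+1) → Bool) → ℝ,
        ∑ x, F x = (∑ z : Fin n → Bool, F (Fin.cons true z))
          + (∑ z : Fin n → Bool, F (Fin.cons false z)) := by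
      intro F
      rw [← (Fin.consEquiv (fun _ : Fin (n+1) => Bool)).sum_comp F, Fintype.sum_prod_type,
        Fintype.sum_bool]
      rfl
    have hwt : ∀ (ω : Bool) (z : Fin n → Bool),
        cubeWt w (Fin.cons ω z) = (if ω then p else 1 - p) * cubeWt w' z := by
      intro ω z
      unfold cubeWt
      rw [Fin.prod_univ_succ]
      simp only [Fin.cons_zero, Fin.cons_succ]
      rfl
    have hPr : ∀ E : (Fin (n+1) → Bool) → Prop,
        cubePr w E = p * cubePr w' (fun z => E (Fin.cons true z))
            + (1 - p) * cubePr w' (fun z => E (Fin.cons false z)) := by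
      intro E
      unfold cubePr
      rw [hsum (fun x => if E x then cubeWt w x else 0), Finset.mul_sum, Finset.mul_sum]
      congr 1
      · apply Finset.sum_congr rfl; intro z _
        rw [hwt]
        by_cases hE : E (Fin.cons true z) <;> simp [hE]
      · apply Finset.sum_congr rfl; intro z _
        rw [hwt]
        by_cases hE : E (Fin.cons false z) <;> simp [hE]
    set Pσ : Bool → Fin q → ℝ := fun ω j => cubePr w' (· ∈ sec ω j) with hPσdef
    have hPrA : ∀ j, cubePr w (· ∈ A j) = p * Pσ true j + (1 - p) * Pσ false j := by
      intro j; exact hPr (· ∈ A j)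
    set bb : Fin q → ℝ := fun j => cubePr w' (· ∈ B j) with hbbdef
    have hbb0 : ∀ j, 0 ≤ bb j := fun j => cubePr_nonneg hw' _
    have hPσ0 : ∀ ω j, 0 ≤ Pσ ω j := fun ω j => cubePr_nonneg hw' _
    have hPσle : ∀ ω j, Pσ ω j ≤ bb j := by
      intro ω j
      apply cubePr_mono hw'
      intro z hz
      cases ω
      · exact Or.inr hz
      · exact Or.inl hz
    have key1 : ∀ (ω : Bool) (z : Fin n → Bool), hSet (Fin.cons ω z) A ≤ hSet z B + 1 := by
      intro ω z
      obtain ⟨y, hy, hyval⟩ := hSet_spec (x := z) hBne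
      have hch : ∀ j, ∃ ω' : Bool, Fin.cons ω' (y j) ∈ A j := by
        intro j
        rcases hy j with h | h
        · exact ⟨true, h⟩
        · exact ⟨false, h⟩
      choose ωy hωy using hch
      set Y : Fin q → Fin (n+1) → Bool := fun j => Fin.cons (ωy j) (y j) with hYdef
      have hle : hSet (Fin.cons ω z) A ≤ hTup (Fin.cons ω z) Y := hSet_le hωy
      refine hle.trans ?_
      rw [← hyval]
      unfold hTup
      rw [Finset.card_filter, Finset.card_filter, Fin.sum_univ_succ]
      have hsucc : ∀ i : Fin n,
          (if (∀ j, (Fin.cons ω z : Fin (n+1) → Bool) i.succ ≠ Y j i.succ) then 1 else 0)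
            = (if (∀ j, z i ≠ y j i) then 1 else 0) := by
        intro i
        simp only [hYdef, Fin.cons_succ]
      rw [Finset.sum_congr rfl fun i _ => hsucc i]
      have h0le : (if (∀ j, (Fin.cons ω z : Fin (n+1) → Bool) 0 ≠ Y j 0) then 1 else 0) ≤ 1 := by
        split <;> omega
      set S := ∑ i : Fin n, (if (∀ j, z i ≠ y j i) then 1 else 0) with hS
      omega
    have key2 : ∀ (ω : Bool) (j₀ : Fin q), (sec ω j₀).Nonempty →
        ∀ z : Fin n → Bool,
          hSet (Fin.cons ω z) A ≤ hSet z (Function.update B j₀ (sec ω j₀)) := by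
      intro ω j₀ hne z
      have hCne : ∀ j, (Function.update B j₀ (sec ω j₀) j).Nonempty := by
        intro j
        by_cases h : j = j₀
        · subst h; rw [Function.update_self]; exact hne
        · rw [Function.update_of_ne h]; exact hBne j
      obtain ⟨y, hy, hyval⟩ := hSet_spec (x := z) hCne
      have hch : ∀ j, ∃ ω' : Bool, Fin.cons ω' (y j) ∈ A j ∧ (j = j₀ → ω' = ω) := by
        intro j
        by_cases h : j = j₀
        · subst h
          have hj := hy j; rw [Function.update_self] at hj
          exact ⟨ω, hj, fun _ => rfl⟩
        · have hj := hy j; rw [Function.update_of_ne h] at hj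
          rcases hj with h' | h'
          · exact ⟨true, h', fun hc => absurd hc h⟩
          · exact ⟨false, h', fun hc => absurd hc h⟩
      choose ωy hωy1 hωy2 using hch
      set Y : Fin q → Fin (n+1) → Bool := fun j => Fin.cons (ωy j) (y j) with hYdef
      have hle : hSet (Fin.cons ω z) A ≤ hTup (Fin.cons ω z) Y := hSet_le hωy1
      refine hle.trans ?_
      rw [← hyval]
      unfold hTup
      rw [Finset.card_filter, Finset.card_filter, Fin.sum_univ_succ]
      have hsucc : ∀ i : Fin n,
          (if (∀ j, (Fin.cons ω z : Fin (n+1) → Bool) i.succ ≠ Y j i.succ) then 1 else 0)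
            = (if (∀ j, z i ≠ y j i) then 1 else 0) := by
        intro i
        simp only [hYdef, Fin.cons_succ]
      rw [Finset.sum_congr rfl fun i _ => hsucc i]
      have h00 : (if (∀ j, (Fin.cons ω z : Fin (n+1) → Bool) 0 ≠ Y j 0) then 1 else 0) = 0 := by
        rw [if_neg]
        intro hall
        exact hall j₀ (by simp [hYdef, Fin.cons_zero, hωy2 j₀ rfl])
      rw [h00, Nat.zero_add]
    set X : Bool → ℝ := fun ω => ∑ z : Fin n → Bool,
      cubeWt w' z * (q:ℝ) ^ (hSet (Fin.cons ω z) A) with hX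
    have hX0 : ∀ ω, 0 ≤ X ω := fun ω => Finset.sum_nonneg fun z _ =>
      mul_nonneg (cubeWt_nonneg hw' z) (pow_nonneg (by positivity) _)
    have hXsum : (∑ x, cubeWt w x * (q:ℝ) ^ (hSet x A)) = p * X true + (1 - p) * X false := by
      rw [hsum (fun x => cubeWt w x * (q:ℝ) ^ (hSet x A))]
      have e1 : p * X true = ∑ z : Fin n → Bool,
          cubeWt w (Fin.cons true z) * (q:ℝ) ^ (hSet (Fin.cons true z) A) := by
        rw [show X true = ∑ z : Fin n → Bool,
          cubeWt w' z * (q:ℝ) ^ (hSet (Fin.cons true z) A) from rfl, Finset.mul_sum]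
        apply Finset.sum_congr rfl; intro z _
        rw [hwt]; simp; ring
      have e2 : (1 - p) * X false = ∑ z : Fin n → Bool,
          cubeWt w (Fin.cons false z) * (q:ℝ) ^ (hSet (Fin.cons false z) A) := by
        rw [show X false = ∑ z : Fin n → Bool,
          cubeWt w' z * (q:ℝ) ^ (hSet (Fin.cons false z) A) from rfl, Finset.mul_sum]
        apply Finset.sum_congr rfl; intro z _
        rw [hwt]; simp; ring
      rw [e1, e2]
    rw [hXsum, Finset.prod_congr rfl fun j _ => hPrA j]
    by_cases hbpos : ∀ j, 0 < bb j
    case neg =>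
      push_neg at hbpos
      obtain ⟨j₀, hj₀⟩ := hbpos
      have hbz : bb j₀ = 0 := le_antisymm hj₀ (hbb0 j₀)
      have hfz : p * Pσ true j₀ + (1 - p) * Pσ false j₀ = 0 := by
        have h1 : Pσ true j₀ = 0 := le_antisymm (hbz ▸ hPσle true j₀) (hPσ0 true j₀)
        have h2 : Pσ false j₀ = 0 := le_antisymm (hbz ▸ hPσle false j₀) (hPσ0 false j₀)
        rw [h1, h2]; ring
      rw [Finset.prod_eq_zero (Finset.mem_univ j₀) hfz, mul_zero]
      exact zero_le_one
    case pos =>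
      set a : Bool → Fin q → ℝ := fun ω j => Pσ ω j / bb j with hadef
      have ha0 : ∀ ω j, 0 ≤ a ω j := fun ω j => div_nonneg (hPσ0 ω j) (hbb0 j)
      have ha1 : ∀ ω j, a ω j ≤ 1 := fun ω j => (div_le_one (hbpos j)).mpr (hPσle ω j)
      have hqne : (Finset.univ : Finset (Fin q)).Nonempty := ⟨⟨0, hq⟩, Finset.mem_univ _⟩
      set α : Bool → ℝ := fun ω => Finset.univ.sup' hqne (a ω) with hαdef
      have hαge : ∀ ω j, a ω j ≤ α ω := fun ω j => Finset.le_sup' (a ω) (Finset.mem_univ j)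
      have hα0 : ∀ ω, 0 ≤ α ω := fun ω => le_trans (ha0 ω ⟨0,hq⟩) (hαge ω _)
      have hα1 : ∀ ω, α ω ≤ 1 := fun ω => Finset.sup'_le _ _ fun j _ => ha1 ω j
      have hprodb0 : 0 ≤ ∏ j, bb j := Finset.prod_nonneg fun j _ => hbb0 j
      have claimA : ∀ ω, X ω * ∏ j, bb j ≤ (q:ℝ) + 1 - q * α ω := by
        intro ω
        by_cases hsmall : (q:ℝ) * α ω ≤ 1
        · have hGB := ih w' hw' B hBne
          have hXle : X ω ≤ (q:ℝ) * ∑ z, cubeWt w' z * (q:ℝ) ^ (hSet z B) := by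
            rw [Finset.mul_sum]
            apply Finset.sum_le_sum
            intro z _
            have hkk := key1 ω z
            have hpow : (q:ℝ) ^ (hSet (Fin.cons ω z) A) ≤ (q:ℝ) ^ (hSet z B + 1) :=
              pow_le_pow_right₀ hq1 hkk
            calc cubeWt w' z * (q:ℝ) ^ (hSet (Fin.cons ω z) A)
                ≤ cubeWt w' z * (q:ℝ) ^ (hSet z B + 1) :=
                  mul_le_mul_of_nonneg_left hpow (cubeWt_nonneg hw' z)
              _ = (q:ℝ) * (cubeWt w' z * (q:ℝ) ^ (hSet z B)) := by rw [pow_succ]; ring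
          calc X ω * ∏ j, bb j
              ≤ ((q:ℝ) * ∑ z, cubeWt w' z * (q:ℝ) ^ (hSet z B)) * ∏ j, bb j :=
                mul_le_mul_of_nonneg_right hXle hprodb0
            _ = (q:ℝ) * ((∑ z, cubeWt w' z * (q:ℝ) ^ (hSet z B)) * ∏ j, bb j) := by ring
            _ ≤ (q:ℝ) * 1 := mul_le_mul_of_nonneg_left hGB (by positivity)
            _ = (q:ℝ) := mul_one _
            _ ≤ (q:ℝ) + 1 - q * α ω := by linarith
        · push_neg at hsmall
          have hαpos : 0 < α ω := by
            rcases lt_or_eq_of_le (hα0 ω) with h | h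
            · exact h
            · exfalso; rw [← h, mul_zero] at hsmall; linarith
          obtain ⟨j₀, _, hj₀⟩ := Finset.exists_mem_eq_sup' hqne (a ω)
          have hj₀' : α ω = a ω j₀ := hj₀
          have hPσeq : Pσ ω j₀ = α ω * bb j₀ := by
            rw [hj₀']
            exact (div_mul_cancel₀ _ (hbpos j₀).ne').symm
          have hPσpos : 0 < Pσ ω j₀ := by
            rw [hPσeq]; exact mul_pos hαpos (hbpos j₀)
          have hsecne : (sec ω j₀).Nonempty := by
            obtain ⟨z0, hz0⟩ := cubePr_pos_nonempty hPσpos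
            exact ⟨z0, hz0⟩
          have hCne : ∀ j, (Function.update B j₀ (sec ω j₀) j).Nonempty := by
            intro j
            by_cases h : j = j₀
            · subst h; rw [Function.update_self]; exact hsecne
            · rw [Function.update_of_ne h]; exact hBne j
          have hGC := ih w' hw' (Function.update B j₀ (sec ω j₀)) hCne
          have hprodC : ∏ j, cubePr w' (· ∈ Function.update B j₀ (sec ω j₀) j)
              = α ω * ∏ j, bb j := by
            have hfact : ∀ j, cubePr w' (· ∈ Function.update B j₀ (sec ω j₀) j)
                = Function.update bb j₀ (Pσ ω j₀) j := by
              intro j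
              by_cases h : j = j₀
              · subst h; simp only [Function.update_self]; rfl
              · simp only [Function.update_of_ne h]; rfl
            rw [Finset.prod_congr rfl fun j _ => hfact j,
              Finset.prod_update_of_mem (Finset.mem_univ j₀), hPσeq,
              ← Finset.mul_prod_erase Finset.univ bb (Finset.mem_univ j₀),
              Finset.erase_eq]
            ring
          have hXleC : X ω ≤ ∑ z, cubeWt w' z
              * (q:ℝ) ^ (hSet z (Function.update B j₀ (sec ω j₀))) :=
            Finset.sum_le_sum fun z _ => mul_le_mul_of_nonneg_left
              (pow_le_pow_right₀ hq1 (key2 ω j₀ hsecne z)) (cubeWt_nonneg hw' z)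
          have hprodC0 : 0 ≤ ∏ j, cubePr w' (· ∈ Function.update B j₀ (sec ω j₀) j) :=
            Finset.prod_nonneg fun j _ => cubePr_nonneg hw' _
          have hcomb : X ω * (α ω * ∏ j, bb j) ≤ 1 := by
            rw [← hprodC]
            calc X ω * ∏ j, cubePr w' (· ∈ Function.update B j₀ (sec ω j₀) j)
                ≤ (∑ z, cubeWt w' z * (q:ℝ) ^ (hSet z (Function.update B j₀ (sec ω j₀))))
                  * ∏ j, cubePr w' (· ∈ Function.update B j₀ (sec ω j₀) j) :=
                  mul_le_mul_of_nonneg_right hXleC hprodC0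
              _ ≤ 1 := hGC
          have hXb : X ω * ∏ j, bb j ≤ 1 / α ω := by
            rw [le_div_iff₀ hαpos]
            calc X ω * (∏ j, bb j) * α ω = X ω * (α ω * ∏ j, bb j) := by ring
              _ ≤ 1 := hcomb
          refine hXb.trans ?_
          rw [div_le_iff₀ hαpos]
          nlinarith [mul_nonneg (by linarith : (0:ℝ) ≤ (q:ℝ) * α ω - 1)
            (by linarith [hα1 ω] : (0:ℝ) ≤ 1 - α ω)]
      set m := p * α true + (1 - p) * α false with hm
      have hm0 : 0 ≤ m := by nlinarith [hα0 true, hα0 false]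
      have hm1 : m ≤ 1 := by nlinarith [hα1 true, hα1 false, hα0 true, hα0 false]
      have hfactor : ∀ j, p * Pσ true j + (1 - p) * Pσ false j
          = bb j * (p * a true j + (1 - p) * a false j) := by
        intro j
        have h1 : Pσ true j = a true j * bb j :=
          (div_mul_cancel₀ _ (hbpos j).ne').symm
        have h2 : Pσ false j = a false j * bb j :=
          (div_mul_cancel₀ _ (hbpos j).ne').symm
        rw [h1, h2]; ring
      rw [Finset.prod_congr rfl fun j _ => hfactor j, Finset.prod_mul_distrib]
      have hr0 : ∀ j, 0 ≤ p * a true j + (1 - p) * a false j := fun j => by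
        nlinarith [ha0 true j, ha0 false j]
      have hrm : ∀ j, p * a true j + (1 - p) * a false j ≤ m := fun j => by
        nlinarith [hαge true j, hαge false j]
      have hprodr : ∏ j, (p * a true j + (1 - p) * a false j) ≤ m ^ q := by
        calc ∏ j, (p * a true j + (1 - p) * a false j) ≤ ∏ _j : Fin q, m :=
              Finset.prod_le_prod (fun j _ => hr0 j) (fun j _ => hrm j)
          _ = m ^ q := by rw [Finset.prod_const, Finset.card_univ, Fintype.card_fin]
      have hprodr0 : 0 ≤ ∏ j, (p * a true j + (1 - p) * a false j) :=
        Finset.prod_nonneg fun j _ => hr0 j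
      have hS : (p * X true + (1 - p) * X false) * ∏ j, bb j ≤ (q:ℝ) + 1 - q * m := by
        have h1 := claimA true
        have h2 := claimA false
        have e : (p * X true + (1 - p) * X false) * ∏ j, bb j
            = p * (X true * ∏ j, bb j) + (1 - p) * (X false * ∏ j, bb j) := by ring
        rw [e, hm]
        nlinarith [mul_le_mul_of_nonneg_left h1 hp0,
          mul_le_mul_of_nonneg_left h2 (by linarith : (0:ℝ) ≤ 1 - p)]
      have hq1m : 0 ≤ (q:ℝ) + 1 - q * m := by nlinarith [Nat.cast_nonneg (α := ℝ) q]
      calc (p * X true + (1 - p) * X false)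
            * ((∏ j, bb j) * ∏ j, (p * a true j + (1 - p) * a false j))
          = ((p * X true + (1 - p) * X false) * ∏ j, bb j)
            * ∏ j, (p * a true j + (1 - p) * a false j) := by ring
        _ ≤ ((q:ℝ) + 1 - q * m) * ∏ j, (p * a true j + (1 - p) * a false j) :=
            mul_le_mul_of_nonneg_right hS hprodr0
        _ ≤ ((q:ℝ) + 1 - q * m) * m ^ q := mul_le_mul_of_nonneg_left hprodr hq1m
        _ ≤ 1 := by
            rcases eq_or_lt_of_le hm0 with h | h
            · rw [← h]
              rw [zero_pow hq.ne', mul_zero]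
              exact zero_le_one
            · exact bern q m h hm1


/-- Lemma 3.3 (Schechtman-type bound): for monotone subadditive `b`-Lipschitz `f`
with `f(0)=0` on `{0,1}ⁿ` with a product measure, and positive reals `c 1, …, c q`,
`Pr[f(x) > ∑ᵢ cᵢ + k·b] ≤ q^{-k-1} / ∏ᵢ Pr[f(x) ≤ cᵢ]`. -/
theorem stmt4 {n : ℕ} (f : (Fin n → Bool) → ℝ)
    (hmono : ∀ x y : Fin n → Bool, (∀ i, x i = true → y i = true) → f x ≤ f y)
    (hsub : ∀ x y : Fin n → Bool, f (fun i => x i || y i) ≤ f x + f y)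
    (h0 : f (fun _ => false) = 0)
    (b : ℝ) (hb : 0 ≤ b)
    (hlip : ∀ x y : Fin n → Bool, |f x - f y| ≤ b * hamm x y)
    (w : Fin n → ℝ) (hw : ∀ i, 0 ≤ w i ∧ w i ≤ 1)
    (q : ℕ) (hq : 0 < q) (c : Fin q → ℝ) (hc : ∀ i, 0 < c i) (k : ℕ)
    (hpos : ∀ i, 0 < cubePr w (fun x => f x ≤ c i)) :
    cubePr w (fun x => (∑ i, c i) + k * b < f x) ≤
      ((q : ℝ) ^ (k + 1))⁻¹ / ∏ i, cubePr w (fun x => f x ≤ c i) := by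
  set A : Fin q → Set (Fin n → Bool) := fun j => {z | f z ≤ c j} with hAdef
  have hAne : ∀ j, (A j).Nonempty := fun j => ⟨fun _ => false, by
    show f (fun _ => false) ≤ c j
    rw [h0]; exact (hc j).le⟩
  have hq1 : (1:ℝ) ≤ (q:ℝ) := by exact_mod_cast hq
  have hT := talagrand q hq n w hw A hAne
  have hT' : (∑ x, cubeWt w x * (q:ℝ) ^ (hSet x A))
      * (∏ i, cubePr w (fun x => f x ≤ c i)) ≤ 1 := hT
  set E : (Fin n → Bool) → Prop := fun x => (∑ i, c i) + k * b < f x with hE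
  have hstep : ∀ x, E x → (q:ℝ) ^ (k+1) ≤ (q:ℝ) ^ (hSet x A) := by
    intro x hx
    apply pow_le_pow_right₀ hq1
    obtain ⟨y, hy, hyval⟩ := hSet_spec (x := x) hAne
    rw [← hyval]
    exact det_lemma hmono hsub h0 hb hlip c k (fun j => hy j) hx
  have hMarkov : cubePr w E * (q:ℝ) ^ (k+1) ≤ ∑ x, cubeWt w x * (q:ℝ) ^ (hSet x A) := by
    rw [cubePr, Finset.sum_mul]
    apply Finset.sum_le_sum
    intro x _
    by_cases hx : E x
    · rw [if_pos hx]
      exact mul_le_mul_of_nonneg_left (hstep x hx) (cubeWt_nonneg hw x)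
    · rw [if_neg hx, zero_mul]
      exact mul_nonneg (cubeWt_nonneg hw x) (pow_nonneg (by positivity) _)
  have hprodpos : 0 < ∏ i, cubePr w (fun x => f x ≤ c i) := Finset.prod_pos fun i _ => hpos i
  have hqpow : (0:ℝ) < (q:ℝ) ^ (k+1) := by positivity
  have hfinal : cubePr w E * ((q:ℝ) ^ (k+1) * ∏ i, cubePr w (fun x => f x ≤ c i)) ≤ 1 := by
    calc cubePr w E * ((q:ℝ) ^ (k+1) * ∏ i, cubePr w (fun x => f x ≤ c i))
        = (cubePr w E * (q:ℝ) ^ (k+1)) * ∏ i, cubePr w (fun x => f x ≤ c i) := by ring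
      _ ≤ (∑ x, cubeWt w x * (q:ℝ) ^ (hSet x A)) * ∏ i, cubePr w (fun x => f x ≤ c i) :=
          mul_le_mul_of_nonneg_right hMarkov hprodpos.le
      _ ≤ 1 := hT'
  have h2 : cubePr w E ≤ 1 / ((q:ℝ) ^ (k+1) * ∏ i, cubePr w (fun x => f x ≤ c i)) := by
    rw [le_div_iff₀ (mul_pos hqpow hprodpos)]
    exact hfinal
  have h3 : (1:ℝ) / ((q:ℝ) ^ (k+1) * ∏ i, cubePr w (fun x => f x ≤ c i))
      = ((q:ℝ) ^ (k+1))⁻¹ / ∏ i, cubePr w (fun x => f x ≤ c i) := by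
    rw [one_div, mul_inv, div_eq_mul_inv]
  rw [← h3]
  exact h2
end

section
/- Let f : {0,1}^n → ℝ be monotone and subadditive with f(0) = 0, and suppose |f(x) − f(y)| ≤ b · h(x, y) for all x, y ∈ {0,1}^n, where h(x, y) = |{i : x_i ≠ y_i}| and b ≥ 0. Fix reals c_1, …, c_q and let A_i = {y ∈ {0,1}^n : f(y) ≤ c_i} for 1 ≤ i ≤ q, each assumed nonempty. Then for every natural number k, {x : f(x) > (c_1 + ⋯ + c_q) + k·b} ⊆ {x : h(x; A_1, …, A_q) > k}. -/
open scoped Classical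

/-- Lemma: for monotone subadditive `b`-Lipschitz `f` with `f(0)=0`, taking
`Aᵢ = {y : f(y) ≤ cᵢ}` (each nonempty), for every `k`,
`{x : f(x) > ∑ᵢ cᵢ + k·b} ⊆ {x : h(x; A₁,…,A_q) > k}`. -/
theorem stmt7 {n : ℕ} (f : (Fin n → Bool) → ℝ)
    (hmono : ∀ x y : Fin n → Bool, (∀ i, x i = true → y i = true) → f x ≤ f y)
    (hsub : ∀ x y : Fin n → Bool, f (fun i => x i || y i) ≤ f x + f y)
    (h0 : f (fun _ => false) = 0)
    (b : ℝ) (hb : 0 ≤ b)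
    (hlip : ∀ x y : Fin n → Bool, |f x - f y| ≤ b * hamm x y)
    (q : ℕ) (hq : 0 < q) (c : Fin q → ℝ)
    (hne : ∀ i, {y : Fin n → Bool | f y ≤ c i}.Nonempty) (k : ℕ) :
    {x : Fin n → Bool | (∑ i, c i) + k * b < f x} ⊆
      {x : Fin n → Bool | k < hSet x (fun i => {y : Fin n → Bool | f y ≤ c i})} := by
  intro x hx
  simp only [Set.mem_setOf_eq] at hx ⊢
  by_contra hk
  push_neg at hk
  have hsetne : {m | ∃ y : Fin q → Fin n → Bool,
      (∀ j, y j ∈ {y : Fin n → Bool | f y ≤ c j}) ∧ hTup x y = m}.Nonempty := by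
    choose g hg using hne
    exact ⟨hTup x g, g, fun j => hg j, rfl⟩
  obtain ⟨y, hy, hyk⟩ := Nat.sInf_mem hsetne
  have hle : hTup x y ≤ k := by
    rw [hyk]; exact hk
  set xs : Fin n → Bool := fun i => x i && decide (∀ j, x i ≠ y j i) with hxs
  have key : ∀ s : Finset (Fin q),
      f (fun i => xs i || s.sup (fun j => x i && y j i)) ≤
        f xs + ∑ j ∈ s, f (fun i => x i && y j i) := by
    intro s
    induction s using Finset.cons_induction with
    | empty => simp
    | cons a s ha ih =>
      have h1 := hsub (fun i => x i && y a i) (fun i => xs i || s.sup (fun j => x i && y j i))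
      have heq : (fun i => xs i || (Finset.cons a s ha).sup (fun j => x i && y j i)) =
          (fun i => (x i && y a i) || (xs i || s.sup (fun j => x i && y j i))) := by
        funext i
        simp [Finset.sup_cons]
        cases xs i <;> cases (x i && y a i) <;> simp
      rw [heq, Finset.sum_cons]
      linarith
  have hcov : f x ≤ f (fun i => xs i || Finset.univ.sup (fun j => x i && y j i)) := by
    apply hmono
    intro i hxi
    by_cases h : ∀ j, x i ≠ y j i
    · have hxsi : xs i = true := by
        have hd : decide (∀ j, x i ≠ y j i) = true := decide_eq_true h
        show (x i && decide (∀ j, x i ≠ y j i)) = true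
        rw [hd, hxi]
        rfl
      rw [hxsi, Bool.true_or]
    · push_neg at h
      obtain ⟨j, hj⟩ := h
      have hyj : (x i && y j i) = true := by rw [← hj, hxi]; rfl
      have hsup : (x i && y j i) ≤ Finset.univ.sup fun j => x i && y j i :=
        Finset.le_sup (f := fun j => x i && y j i) (Finset.mem_univ j)
      rw [hyj] at hsup
      have hs : Finset.univ.sup (fun j : Fin q => x i && y j i) = true := by
        revert hsup; cases Finset.univ.sup (fun j : Fin q => x i && y j i) <;> simp
      rw [hs, Bool.or_true]
  have hxsle : f xs ≤ b * k := by
    have h1 := hlip xs (fun _ => false)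
    rw [h0] at h1
    have h2 : hamm xs (fun _ => false) ≤ hTup x y := by
      apply Finset.card_le_card
      intro i hi
      simp only [hamm, Finset.mem_filter, Finset.mem_univ, true_and] at hi
      simp only [hTup, Finset.mem_filter, Finset.mem_univ, true_and]
      have : xs i = true := by
        revert hi; cases xs i <;> simp
      simp only [hxs, Bool.and_eq_true, decide_eq_true_eq] at this
      exact this.2
    have h3 : (hamm xs (fun _ => false) : ℝ) ≤ (k : ℝ) := by
      exact_mod_cast h2.trans hle
    calc f xs ≤ b * hamm xs (fun _ => false) := by
            have := (abs_le.mp h1).2; linarith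
      _ ≤ b * k := by
            exact mul_le_mul_of_nonneg_left h3 hb
  have hsumle : ∑ j : Fin q, f (fun i => x i && y j i) ≤ ∑ j, c j := by
    apply Finset.sum_le_sum
    intro j _
    have h1 : f (fun i => x i && y j i) ≤ f (y j) := by
      apply hmono
      intro i hi
      exact (Bool.and_eq_true _ _ |>.mp hi).2
    exact h1.trans (hy j)
  have := key Finset.univ
  linarith
end

section
/- Let f : {0,1}^n → ℝ be monotone and subadditive with f(0) = 0, and suppose |f(x) − f(y)| ≤ b · h(x, y) for all x, y ∈ {0,1}^n, where h(x, y) = |{i : x_i ≠ y_i}| and b ≥ 0. Let x be drawn from a product probability measure μ on {0,1}^n, let M ≥ 0 and q be a positive integer, and set A = {y ∈ {0,1}^n : f(y) ≤ M}, assumed nonempty. Then E[f(x)] ≤ (μ(A) + (1 − μ(A))·q)·M + b·E[h(x; A, …, A)], where h(x; A, …, A) uses q copies of A. -/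
open scoped Classical

/-- For monotone subadditive `b`-Lipschitz `f` with `f(0)=0` on `{0,1}ⁿ` with a
product measure, `M ≥ 0`, `q ≥ 1` and `A = {y : f(y) ≤ M}` nonempty,
`E[f(x)] ≤ (μ(A) + (1-μ(A))·q)·M + b·E[h(x; A, …, A)]` (`q` copies of `A`). -/
theorem stmt8 {n : ℕ} (f : (Fin n → Bool) → ℝ)
    (hmono : ∀ x y : Fin n → Bool, (∀ i, x i = true → y i = true) → f x ≤ f y)
    (hsub : ∀ x y : Fin n → Bool, f (fun i => x i || y i) ≤ f x + f y)
    (h0 : f (fun _ => false) = 0)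
    (b : ℝ) (hb : 0 ≤ b)
    (hlip : ∀ x y : Fin n → Bool, |f x - f y| ≤ b * hamm x y)
    (w : Fin n → ℝ) (hw : ∀ i, 0 ≤ w i ∧ w i ≤ 1)
    (M : ℝ) (hM : 0 ≤ M) (q : ℕ) (hq : 0 < q)
    (hne : {y : Fin n → Bool | f y ≤ M}.Nonempty) :
    cubeExp w f ≤
      (cubePr w (fun x => f x ≤ M) + (1 - cubePr w (fun x => f x ≤ M)) * q) * M +
        b * cubeExp w
          (fun x => (hSet x (fun _ : Fin q => {y : Fin n → Bool | f y ≤ M}) : ℝ)) := by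
  classical
  set A : Set (Fin n → Bool) := {y | f y ≤ M} with hA
  have hwt : ∀ x, 0 ≤ cubeWt w x := by
    intro x; unfold cubeWt
    apply Finset.prod_nonneg; intro i _
    by_cases h : x i <;> simp [h]
    · exact (hw i).1
    · linarith [(hw i).2]
  have hsum1 : ∑ x : Fin n → Bool, cubeWt w x = 1 := by
    unfold cubeWt
    rw [← Fintype.prod_sum (fun (i : Fin n) (b : Bool) => if b then w i else 1 - w i)]
    have h1 : ∀ i : Fin n, (∑ b : Bool, if b then w i else 1 - w i) = 1 := by
      intro i; rw [Fintype.sum_bool]; simp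
    rw [Finset.prod_congr rfl (fun i _ => h1 i), Finset.prod_const_one]
  have hSetmem : ∀ x : Fin n → Bool, ∃ y : Fin q → Fin n → Bool,
      (∀ j, y j ∈ A) ∧ hTup x y = hSet x (fun _ : Fin q => A) := by
    intro x
    have hne' : {k | ∃ y : Fin q → Fin n → Bool,
        (∀ j, y j ∈ (fun _ : Fin q => A) j) ∧ hTup x y = k}.Nonempty := by
      obtain ⟨y0, hy0⟩ := hne
      exact ⟨hTup x (fun _ => y0), fun _ => y0, fun _ => hy0, rfl⟩
    exact Nat.sInf_mem hne'
  have key : ∀ x : Fin n → Bool,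
      f x ≤ (if f x ≤ M then M else (q : ℝ) * M) + b * (hSet x (fun _ : Fin q => A) : ℝ) := by
    intro x
    have hbh : 0 ≤ b * (hSet x (fun _ : Fin q => A) : ℝ) := by positivity
    by_cases hx : f x ≤ M
    · rw [if_pos hx]; linarith
    · rw [if_neg hx]
      obtain ⟨y, hyA, hy⟩ := hSetmem x
      set s : Fin n → Bool := fun i => if (∀ j, x i ≠ y j i) then x i else false with hs
      have aux : ∀ (t : Finset (Fin q)) (u : Fin q → Fin n → Bool),
          f (fun i => t.sup (fun j => u j i)) ≤ ∑ j ∈ t, f (u j) := by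
        intro t
        induction t using Finset.cons_induction with
        | empty => intro u; simpa using h0.le
        | cons a t ha ih =>
          intro u
          have h1 : (fun i => (Finset.cons a t ha).sup (fun j => u j i))
              = (fun i => u a i || t.sup (fun j => u j i)) := by
            funext i; rw [Finset.sup_cons]; rfl
          rw [h1, Finset.sum_cons]
          exact le_trans (hsub (u a) (fun i => t.sup (fun j => u j i)))
            (by linarith [ih u])
      have hdecomp : x = fun i => s i || Finset.univ.sup (fun j => x i && y j i) := by
        funext i
        by_cases hxi : x i = true
        · by_cases hall : ∀ j, x i ≠ y j i
          · have hsi : s i = true := by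
              show (if (∀ j, x i ≠ y j i) then x i else false) = true
              rw [if_pos hall]; exact hxi
            rw [hsi, Bool.true_or]; exact hxi
          · push_neg at hall; obtain ⟨j, hj⟩ := hall
            have hle := Finset.le_sup (f := fun j => x i && y j i) (Finset.mem_univ j)
            have hsup : Finset.univ.sup (fun j => x i && y j i) = true := by
              apply le_antisymm le_top
              have htrue : (x i && y j i) = true := by rw [← hj, hxi]; rfl
              exact le_trans (le_of_eq htrue.symm) hle
            rw [hsup, Bool.or_true]; exact hxi
        · have hxi' : x i = false := by simpa using hxi
          have hsi : s i = false := by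
            show (if (∀ j, x i ≠ y j i) then x i else false) = false
            by_cases hc : ∀ j, x i ≠ y j i
            · rw [if_pos hc]; exact hxi'
            · rw [if_neg hc]
          have hsup : Finset.univ.sup (fun j => x i && y j i) = false :=
            le_bot_iff.mp (Finset.sup_le fun j _ => by simp [hxi'])
          rw [hsi, hsup, Bool.false_or]; exact hxi'
      have hx_eq : f x = f (fun i => s i || Finset.univ.sup (fun j => x i && y j i)) := by
        rw [← hdecomp]
      have h1 : f x ≤ f s + ∑ j : Fin q, f (fun i => x i && y j i) := by
        rw [hx_eq]
        refine le_trans (hsub s (fun i => Finset.univ.sup (fun j => x i && y j i))) ?_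
        have := aux Finset.univ (fun j i => x i && y j i)
        linarith
      have hfs : f s ≤ b * (hSet x (fun _ : Fin q => A) : ℝ) := by
        have hl := hlip s (fun _ => false)
        rw [h0, sub_zero] at hl
        have h2 : f s ≤ b * hamm s (fun _ => false) := le_trans (le_abs_self _) hl
        have h3 : hamm s (fun _ => false) ≤ hTup x y := by
          unfold hamm hTup
          apply Finset.card_le_card
          intro i hi
          simp only [Finset.mem_filter, Finset.mem_univ, true_and] at hi ⊢
          by_contra hc
          simp [hs, hc] at hi
        calc f s ≤ b * hamm s (fun _ => false) := h2
          _ ≤ b * hTup x y := by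
              exact mul_le_mul_of_nonneg_left (Nat.cast_le.mpr h3) hb
          _ = b * (hSet x (fun _ : Fin q => A) : ℝ) := by rw [hy]
      have hvj : ∀ j : Fin q, f (fun i => x i && y j i) ≤ M := by
        intro j
        refine le_trans (hmono _ (y j) fun i hi => ?_) (hyA j)
        exact (Bool.and_eq_true _ _).mp hi |>.2
      have hsumv : ∑ j : Fin q, f (fun i => x i && y j i) ≤ (q : ℝ) * M := by
        calc ∑ j : Fin q, f (fun i => x i && y j i) ≤ ∑ _j : Fin q, M :=
              Finset.sum_le_sum fun j _ => hvj j
          _ = (q : ℝ) * M := by simp [mul_comm]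
      linarith
  -- expectation step
  have hPrfl : cubePr w (fun x => f x ≤ M) = ∑ x : Fin n → Bool,
      if f x ≤ M then cubeWt w x else 0 := rfl
  set P := ∑ x : Fin n → Bool, if f x ≤ M then cubeWt w x else 0 with hP
  have hstep : cubeExp w f ≤ ∑ x : Fin n → Bool,
      cubeWt w x * ((if f x ≤ M then M else (q : ℝ) * M)
        + b * (hSet x (fun _ : Fin q => A) : ℝ)) := by
    unfold cubeExp
    exact Finset.sum_le_sum fun x _ => mul_le_mul_of_nonneg_left (key x) (hwt x)
  have hsplit : ∑ x : Fin n → Bool,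
      cubeWt w x * ((if f x ≤ M then M else (q : ℝ) * M)
        + b * (hSet x (fun _ : Fin q => A) : ℝ))
      = (P * M + (1 - P) * ((q : ℝ) * M))
        + b * cubeExp w (fun x => (hSet x (fun _ : Fin q => A) : ℝ)) := by
    have hterm : ∀ x : Fin n → Bool,
        cubeWt w x * ((if f x ≤ M then M else (q : ℝ) * M)
          + b * (hSet x (fun _ : Fin q => A) : ℝ))
        = ((if f x ≤ M then cubeWt w x else 0) * M
            + (cubeWt w x - (if f x ≤ M then cubeWt w x else 0)) * ((q : ℝ) * M))
          + b * (cubeWt w x * (hSet x (fun _ : Fin q => A) : ℝ)) := by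
      intro x; by_cases hc : f x ≤ M <;> simp [hc] <;> ring
    rw [Finset.sum_congr rfl fun x _ => hterm x, Finset.sum_add_distrib,
      Finset.sum_add_distrib, ← Finset.sum_mul, ← Finset.sum_mul,
      Finset.sum_sub_distrib, hsum1, ← Finset.mul_sum]
    rfl
  rw [hPrfl]
  calc cubeExp w f ≤ _ := hstep
    _ = _ := hsplit
    _ = (P + (1 - P) * q) * M
        + b * cubeExp w (fun x => (hSet x (fun _ : Fin q => A) : ℝ)) := by ring
end

section
/- Let (h_i)_{i ≥ 1} be nonnegative reals such that ∑_{i ≥ 1} h_i ≤ 1/2 and ∑_{i ≥ 1} 2^i · h_i ≤ 7/2 (both series convergent). Then ∑_{i ≥ 1} i · h_i ≤ 11/8. -/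
lemma aux4n : ∀ n : ℕ, 1 ≤ n → 4 * n ≤ 4 + 2 ^ n := by
  intro n hn
  induction n with
  | zero => omega
  | succ m ih =>
    rcases Nat.lt_or_ge m 3 with hm | hm
    · interval_cases m <;> norm_num
    · have h4 : (4 : ℕ) ≤ 2 ^ m := by
        calc (4:ℕ) = 2^2 := rfl
        _ ≤ 2^m := Nat.pow_le_pow_right (by norm_num) (by omega)
      have := ih (by omega)
      have : 4 * (m+1) ≤ 4 + 2^m + 4 := by omega
      calc 4 * (m+1) ≤ 4 + 2^m + 2^m := by omega
      _ = 4 + 2^(m+1) := by ring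

/-- If `(h i)_{i ≥ 1}` are nonnegative reals with `∑_{i≥1} h i ≤ 1/2` and
`∑_{i≥1} 2^i · h i ≤ 7/2` (both series convergent), then `∑_{i≥1} i · h i ≤ 11/8`. -/
theorem stmt9 (h : ℕ → ℝ) (hnn : ∀ i, 1 ≤ i → 0 ≤ h i)
    (hs1 : Summable fun i : ℕ => h (i + 1))
    (hs2 : Summable fun i : ℕ => (2 : ℝ) ^ (i + 1) * h (i + 1))
    (hb1 : (∑' i : ℕ, h (i + 1)) ≤ 1 / 2)
    (hb2 : (∑' i : ℕ, (2 : ℝ) ^ (i + 1) * h (i + 1)) ≤ 7 / 2) :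
    (∑' i : ℕ, ((i : ℝ) + 1) * h (i + 1)) ≤ 11 / 8 := by
  have key : ∀ i : ℕ, ((i : ℝ) + 1) * h (i + 1)
      ≤ h (i + 1) + (1/4) * ((2 : ℝ) ^ (i + 1) * h (i + 1)) := by
    intro i
    have hh := hnn (i + 1) (by omega)
    have hb : ((i : ℝ) + 1) ≤ 1 + (1/4) * (2 : ℝ) ^ (i + 1) := by
      have := aux4n (i + 1) (by omega)
      have : (4 : ℝ) * ((i : ℝ) + 1) ≤ 4 + 2 ^ (i + 1) := by
        exact_mod_cast this
      linarith
    nlinarith [mul_le_mul_of_nonneg_right hb hh]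
  have hsumr : Summable (fun i : ℕ => h (i + 1) + (1/4) * ((2 : ℝ) ^ (i + 1) * h (i + 1))) :=
    hs1.add (hs2.mul_left _)
  have hsuml : Summable (fun i : ℕ => ((i : ℝ) + 1) * h (i + 1)) := by
    apply Summable.of_nonneg_of_le (fun i => mul_nonneg (by positivity) (hnn _ (by omega))) key hsumr
  calc (∑' i : ℕ, ((i : ℝ) + 1) * h (i + 1))
      ≤ ∑' i : ℕ, (h (i + 1) + (1/4) * ((2 : ℝ) ^ (i + 1) * h (i + 1))) :=
        Summable.tsum_le_tsum key hsuml hsumr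
    _ = (∑' i : ℕ, h (i + 1)) + (1/4) * ∑' i : ℕ, (2 : ℝ) ^ (i + 1) * h (i + 1) := by
        rw [Summable.tsum_add hs1 (hs2.mul_left _), tsum_mul_left]
    _ ≤ 1/2 + (1/4) * (7/2) := by
        have : (1/4 : ℝ) * ∑' i : ℕ, (2 : ℝ) ^ (i + 1) * h (i + 1) ≤ (1/4) * (7/2) := by
          linarith
        linarith
    _ = 11/8 := by norm_num
end

section
/- Let v be a subadditive set function on subsets of a finite set S with v(∅) = 0, and let t be a positive integer. Let S' be a random subset of S that includes each element e independently with probability exactly 1/t. Then E[v(S')] ≥ v(S)/t. -/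
open scoped Classical

lemma aux_sup_le_sum {α ι : Type*} [DecidableEq α] (v : Finset α → ℝ)
    (hsub : ∀ A B : Finset α, v (A ∪ B) ≤ v A + v B) (h0 : v ∅ = 0)
    (s : Finset ι) (f : ι → Finset α) :
    v (s.sup f) ≤ ∑ i ∈ s, v (f i) := by
  induction s using Finset.induction_on with
  | empty => simp [h0]
  | insert _ _ h ih =>
    rw [Finset.sup_insert, Finset.sum_insert h]
    calc v (_ ⊔ _) ≤ v _ + v _ := hsub _ _
    _ ≤ _ := by linarith

lemma aux_count {α : Type*} [Fintype α] [DecidableEq α] (t : ℕ) (i : Fin t)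
    (T : Finset α) :
    (Finset.univ.filter (fun f : α → Fin t =>
        Finset.univ.filter (fun e => f e = i) = T)).card
      = (t - 1) ^ (Fintype.card α - T.card) := by
  have key : (Finset.univ.filter (fun f : α → Fin t =>
      Finset.univ.filter (fun e => f e = i) = T))
      = Fintype.piFinset (fun e : α => if e ∈ T then ({i} : Finset (Fin t)) else {i}ᶜ) := by
    ext f
    simp only [Finset.mem_filter, Finset.mem_univ, true_and, Fintype.mem_piFinset]
    constructor
    · intro h e
      by_cases he : e ∈ T
      · simp only [he, if_pos, Finset.mem_singleton]
        have := Finset.ext_iff.mp h e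
        simpa [he] using this
      · simp only [he, if_neg, Finset.mem_compl, Finset.mem_singleton]
        have := Finset.ext_iff.mp h e
        simpa [he] using this
    · intro h
      ext e
      have := h e
      by_cases he : e ∈ T <;> simp_all
  rw [key, Fintype.card_piFinset]
  have hc : ∀ e : α, (if e ∈ T then ({i} : Finset (Fin t)) else {i}ᶜ).card
      = if e ∈ T then 1 else t - 1 := by
    intro e
    by_cases he : e ∈ T <;> simp [he, Finset.card_compl]
  simp_rw [hc]
  rw [Finset.prod_ite, Finset.prod_const, Finset.prod_const, one_pow, one_mul,
    Finset.filter_not]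
  congr 1
  rw [Finset.card_sdiff_of_subset (by simp [Finset.filter_subset])]
  congr 1
  simp

lemma aux_wt {α : Type*} [Fintype α] [DecidableEq α] (t : ℕ) (ht : 0 < t)
    (T : Finset α) :
    subsetWt (fun _ : α => 1 / (t : ℝ)) T
      = ((t - 1 : ℕ) : ℝ) ^ (Fintype.card α - T.card) / (t : ℝ) ^ Fintype.card α := by
  have ht' : (0 : ℝ) < t := by exact_mod_cast ht
  have hcast : ((t - 1 : ℕ) : ℝ) = (t : ℝ) - 1 := by
    push_cast [Nat.cast_sub ht]; ring
  unfold subsetWt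
  rw [Finset.prod_ite, Finset.prod_const, Finset.prod_const, Finset.filter_not]
  have h1 : (Finset.univ.filter (fun e => e ∈ T)).card = T.card := by
    congr 1; ext e; simp
  have h2 : (Finset.univ \ Finset.univ.filter (fun e => e ∈ T)).card
      = Fintype.card α - T.card := by
    rw [Finset.card_sdiff_of_subset (by simp [Finset.filter_subset]), h1, Finset.card_univ]
  rw [h1, h2, hcast]
  have hle : T.card ≤ Fintype.card α := Finset.card_le_univ T
  have : (1 - 1 / (t : ℝ)) = ((t : ℝ) - 1) / t := by field_simp
  rw [this, div_pow, div_pow, one_pow]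
  rw [div_mul_div_comm, one_mul]
  congr 1
  rw [← pow_add]
  congr 1
  omega


/-- For a subadditive `v` with `v ∅ = 0` and independent sampling of every element
with probability exactly `1/t` (`t` a positive integer), `E[v(S')] ≥ v(S)/t`. -/
theorem stmt10 {α : Type*} [Fintype α] [DecidableEq α]
    (v : Finset α → ℝ)
    (hsub : ∀ A B : Finset α, v (A ∪ B) ≤ v A + v B)
    (h0 : v ∅ = 0)
    (t : ℕ) (ht : 0 < t) :
    v Finset.univ / (t : ℝ) ≤ expVal (fun _ : α => 1 / (t : ℝ)) v := by
  set n := Fintype.card α with hn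
  have ht' : (0 : ℝ) < t := by exact_mod_cast ht
  set C : ℝ := ∑ T : Finset α, ((t - 1 : ℕ) : ℝ) ^ (n - T.card) * v T with hC
  -- expVal = C / t^n
  have hexp : expVal (fun _ : α => 1 / (t : ℝ)) v = C / (t : ℝ) ^ n := by
    unfold expVal
    rw [hC, Finset.sum_div]
    refine Finset.sum_congr rfl fun T _ => ?_
    rw [aux_wt t ht T, div_mul_eq_mul_div]
  -- pointwise inequality
  have hptwise : ∀ f : α → Fin t,
      v Finset.univ ≤ ∑ i : Fin t, v (Finset.univ.filter (fun e => f e = i)) := by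
    intro f
    have huniv : (Finset.univ : Finset α)
        = (Finset.univ : Finset (Fin t)).sup (fun i => Finset.univ.filter (fun e => f e = i)) := by
      ext e
      simp only [Finset.mem_univ, true_iff, Finset.mem_sup, Finset.mem_filter]
      exact ⟨f e, by simp⟩
    conv_lhs => rw [huniv]
    exact aux_sup_le_sum v hsub h0 _ _
  -- sum over all f
  have hsum : ((t : ℝ) ^ n) * v Finset.univ
      ≤ ∑ f : α → Fin t, ∑ i : Fin t, v (Finset.univ.filter (fun e => f e = i)) := by
    have := Finset.sum_le_sum (fun f (_ : f ∈ (Finset.univ : Finset (α → Fin t))) => hptwise f)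
    rw [Finset.sum_const, Finset.card_univ, Fintype.card_fun, Fintype.card_fin,
      nsmul_eq_mul] at this
    push_cast at this
    convert this using 2
  -- reindex each inner sum
  have hre : ∀ i : Fin t,
      ∑ f : α → Fin t, v (Finset.univ.filter (fun e => f e = i)) = C := by
    intro i
    rw [← Finset.sum_fiberwise' Finset.univ (fun f : α → Fin t =>
      Finset.univ.filter (fun e => f e = i)) v]
    rw [hC]
    refine Finset.sum_congr rfl fun T _ => ?_
    rw [Finset.sum_const, nsmul_eq_mul, aux_count t i T]
    push_cast
    rfl
  have hsum2 : ((t : ℝ) ^ n) * v Finset.univ ≤ (t : ℝ) * C := by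
    rw [Finset.sum_comm] at hsum
    calc ((t : ℝ) ^ n) * v Finset.univ
        ≤ ∑ i : Fin t, ∑ f : α → Fin t, v (Finset.univ.filter (fun e => f e = i)) := hsum
      _ = ∑ i : Fin t, C := Finset.sum_congr rfl fun i _ => hre i
      _ = (t : ℝ) * C := by rw [Finset.sum_const, Finset.card_univ, Fintype.card_fin,
            nsmul_eq_mul]
  rw [hexp, div_le_div_iff₀ ht' (by positivity)]
  nlinarith [pow_pos ht' n]
end

section
/- For every real p with 1/2 < p < 1, there exist a finite set S and a monotone subadditive set function v on subsets of S with v(∅) = 0 such that, when S' is a random subset of S including each element independently with probability p, E[v(S')] < p · v(S). -/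
open scoped Classical

lemma subsetWt_eq {α : Type*} [Fintype α] [DecidableEq α] (q : α → ℝ) (T : Finset α) :
    subsetWt q T = (∏ e ∈ T, q e) * ∏ e ∈ Finset.univ \ T, (1 - q e) := by
  unfold subsetWt
  rw [← Finset.prod_mul_prod_compl T (fun e => if e ∈ T then q e else 1 - q e),
    Finset.compl_eq_univ_sdiff]
  congr 1
  · exact Finset.prod_congr rfl fun e he => if_pos he
  · exact Finset.prod_congr rfl fun e he => if_neg (Finset.mem_sdiff.mp he).2

lemma sum_subsetWt {α : Type*} [Fintype α] [DecidableEq α] (q : α → ℝ) :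
    ∑ T : Finset α, subsetWt q T = 1 := by
  have h := Finset.prod_add q (fun e => 1 - q e) (Finset.univ : Finset α)
  simp only [add_sub_cancel, Finset.prod_const_one, Finset.powerset_univ] at h
  exact (Finset.sum_congr rfl fun T _ => subsetWt_eq q T).trans h.symm

lemma subsetWt_univ {α : Type*} [Fintype α] [DecidableEq α] (q : α → ℝ) :
    subsetWt q Finset.univ = ∏ e : α, q e := by
  unfold subsetWt; simp

lemma subsetWt_empty {α : Type*} [Fintype α] [DecidableEq α] (q : α → ℝ) :
    subsetWt q ∅ = ∏ e : α, (1 - q e) := by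
  unfold subsetWt; simp

/-- For every `1/2 < p < 1` there are a finite ground set and a monotone subadditive
`v` with `v ∅ = 0` such that sampling each element independently with probability `p`
gives `E[v(S')] < p · v(S)`. -/
theorem stmt11 (p : ℝ) (hp1 : 1 / 2 < p) (hp2 : p < 1) :
    ∃ (s : ℕ) (v : Finset (Fin s) → ℝ),
      (∀ A B : Finset (Fin s), A ⊆ B → v A ≤ v B) ∧
      (∀ A B : Finset (Fin s), v (A ∪ B) ≤ v A + v B) ∧
      v ∅ = 0 ∧
      expVal (fun _ : Fin s => p) v < p * v Finset.univ := by
  have hp0 : 0 < p := by linarith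
  obtain ⟨s, hs⟩ := exists_pow_lt_of_lt_one (by linarith : (0:ℝ) < 2 * p - 1) hp2
  have hsne : s ≠ 0 := by
    rintro rfl
    simp only [pow_zero] at hs
    linarith
  have : Nonempty (Fin s) := ⟨⟨0, Nat.pos_of_ne_zero hsne⟩⟩
  have huniv : (Finset.univ : Finset (Fin s)) ≠ ∅ := Finset.univ_nonempty.ne_empty
  refine ⟨s, fun T => if T = ∅ then 0 else if T = Finset.univ then 2 else 1, ?_, ?_, ?_, ?_⟩
  · -- monotone
    intro A B hAB
    by_cases hA : A = ∅
    · simp only [hA, if_pos rfl]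
      split_ifs <;> norm_num
    · have hB : B ≠ ∅ := fun h => hA (Finset.subset_empty.mp (h ▸ hAB))
      by_cases hAu : A = Finset.univ
      · have hBu : B = Finset.univ := Finset.univ_subset_iff.mp (hAu ▸ hAB)
        simp [hA, hB, hAu, hBu, huniv]
      · simp only [if_neg hA, if_neg hAu]
        split_ifs with h1 h2
        · exact absurd h1 hB
        · norm_num
        · norm_num
  · -- subadditive
    intro A B
    by_cases hA : A = ∅
    · subst hA; simp
    by_cases hB : B = ∅
    · subst hB; simp
    have hvA : (1:ℝ) ≤ if A = ∅ then 0 else if A = Finset.univ then 2 else 1 := by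
      rw [if_neg hA]; split_ifs <;> norm_num
    have hvB : (1:ℝ) ≤ if B = ∅ then 0 else if B = Finset.univ then 2 else 1 := by
      rw [if_neg hB]; split_ifs <;> norm_num
    have hvU : (if A ∪ B = ∅ then (0:ℝ) else if A ∪ B = Finset.univ then 2 else 1) ≤ 2 := by
      split_ifs <;> norm_num
    simp only []
    linarith
  · simp
  · -- expectation bound
    have hv : ∀ T : Finset (Fin s),
        (if T = ∅ then (0:ℝ) else if T = Finset.univ then 2 else 1)
          = 1 + (if T = Finset.univ then (1:ℝ) else 0) - (if T = ∅ then (1:ℝ) else 0) := by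
      intro T
      by_cases h1 : T = ∅
      · subst h1; simp [Ne.symm huniv]
      · by_cases h2 : T = Finset.univ <;> simp [h1, h2, huniv] <;> norm_num
    have hexp : expVal (fun _ : Fin s => p) (fun T => if T = ∅ then (0:ℝ) else if T = Finset.univ then 2 else 1)
        = 1 + p ^ s - (1 - p) ^ s := by
      unfold expVal
      calc ∑ T : Finset (Fin s), subsetWt (fun _ => p) T *
              (if T = ∅ then (0:ℝ) else if T = Finset.univ then 2 else 1)
          = ∑ T : Finset (Fin s), (subsetWt (fun _ => p) T
              + subsetWt (fun _ => p) T * (if T = Finset.univ then (1:ℝ) else 0)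
              - subsetWt (fun _ => p) T * (if T = ∅ then (1:ℝ) else 0)) := by
            refine Finset.sum_congr rfl fun T _ => ?_
            rw [hv T]; ring
        _ = 1 + p ^ s - (1 - p) ^ s := by
            rw [Finset.sum_sub_distrib, Finset.sum_add_distrib, sum_subsetWt]
            simp only [mul_ite, mul_one, mul_zero]
            rw [Finset.sum_ite_eq' Finset.univ (Finset.univ : Finset (Fin s)),
              Finset.sum_ite_eq' Finset.univ (∅ : Finset (Fin s))]
            simp [subsetWt_univ, subsetWt_empty]
    rw [hexp]
    have h1 : (0:ℝ) ≤ (1 - p) ^ s := pow_nonneg (by linarith) s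
    have h2 : p * (if (Finset.univ : Finset (Fin s)) = ∅ then (0:ℝ) else if (Finset.univ : Finset (Fin s)) = Finset.univ then 2 else 1) = 2 * p := by
      rw [if_neg huniv, if_pos rfl]; ring
    rw [h2]
    linarith
end

section
/- For every ε > 0 and every positive integer M, there exist a finite set S and a monotone subadditive set function v on subsets of S with v(∅) = 0 and v({e}) ≤ 1 for all e ∈ S, such that when S' is a random subset of S including each element independently with probability 1/2, M is a median of v(S') and E[v(S')] ≥ (3/2)·M − ε. -/
open scoped Classical

open Finset
open scoped Classical

lemma wt_half {n : ℕ} (T : Finset (Fin n)) :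
    subsetWt (fun _ : Fin n => (1/2 : ℝ)) T = (1/2)^n := by
  have : ∀ x : Fin n, (if x ∈ T then (1/2:ℝ) else 1 - 1/2) = 1/2 := by
    intro x; split <;> norm_num
  simp only [subsetWt, this, Finset.prod_const, Finset.card_univ, Fintype.card_fin]

lemma sum_card_fn {n : ℕ} (g : ℕ → ℝ) :
    ∑ T : Finset (Fin n), g T.card
      = ∑ i ∈ Finset.range (n+1), ((n.choose i : ℝ)) * g i := by
  have h1 : (Finset.univ : Finset (Finset (Fin n))) = (Finset.univ : Finset (Fin n)).powerset :=
    Finset.powerset_univ.symm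
  rw [h1, Finset.sum_powerset]
  simp only [Finset.card_univ, Fintype.card_fin]
  refine Finset.sum_congr rfl fun i _hi => ?_
  have : ∀ T ∈ Finset.powersetCard i (Finset.univ : Finset (Fin n)), g T.card = g i := by
    intro T hT
    rw [(Finset.mem_powersetCard.1 hT).2]
  rw [Finset.sum_congr rfl this, Finset.sum_const, Finset.card_powersetCard,
    Finset.card_univ, Fintype.card_fin, nsmul_eq_mul]

lemma prEvent_card {n : ℕ} (P : ℕ → Prop) :
    prEvent (fun _ : Fin n => (1/2:ℝ)) (fun T => P T.card)
      = (1/2)^n * ∑ i ∈ Finset.range (n+1), (n.choose i : ℝ) * (if P i then 1 else 0) := by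
  unfold prEvent
  have h : ∀ T : Finset (Fin n),
      (if P T.card then subsetWt (fun _ => (1/2:ℝ)) T else 0)
        = (1/2)^n * (if P T.card then 1 else 0) := by
    intro T; rw [wt_half]; split <;> ring
  rw [Finset.sum_congr rfl (fun T _ => h T), ← Finset.mul_sum]
  congr 1
  exact sum_card_fn (fun i => if P i then 1 else 0)

lemma expVal_card {n : ℕ} (g : ℕ → ℝ) :
    expVal (fun _ : Fin n => (1/2:ℝ)) (fun T => g T.card)
      = (1/2)^n * ∑ i ∈ Finset.range (n+1), (n.choose i : ℝ) * g i := by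
  unfold expVal
  have h : ∀ T : Finset (Fin n),
      subsetWt (fun _ => (1/2:ℝ)) T * g T.card = (1/2)^n * g T.card := by
    intro T; rw [wt_half]
  rw [Finset.sum_congr rfl (fun T _ => h T), ← Finset.mul_sum, sum_card_fn g]

lemma ind_sum (n : ℕ) (P : ℕ → Prop) (s : Finset ℕ)
    (hs : Finset.filter P (Finset.range (n+1)) = s) :
    ∑ i ∈ Finset.range (n+1), ((n.choose i : ℝ)) * (if P i then 1 else 0)
      = ((∑ i ∈ s, n.choose i : ℕ) : ℝ) := by
  have h1 : ∀ i, ((n.choose i : ℝ)) * (if P i then 1 else 0)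
      = if P i then ((n.choose i : ℝ)) else 0 := by
    intro i; split <;> ring
  simp only [h1]
  rw [← Finset.sum_filter, hs]
  push_cast; rfl

/-- reflection: tail sum equals head sum -/
lemma tail_refl (m k : ℕ) (hk : k ≤ m) :
    ∑ i ∈ Finset.Ico (m+k) (2*m+1), (2*m).choose i
      = ∑ i ∈ Finset.range (m-k+1), (2*m).choose i := by
  rw [Finset.sum_Ico_eq_sum_range]
  have h1 : 2*m+1 - (m+k) = m-k+1 := by omega
  rw [h1]
  have h2 : ∀ i ∈ Finset.range (m-k+1), (2*m).choose (m+k+i) = (2*m).choose (m-k+1-1-i) := by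
    intro i hi
    simp only [Finset.mem_range] at hi
    rw [← Nat.choose_symm (by omega : m+k+i ≤ 2*m)]
    congr 1; omega
  rw [Finset.sum_congr rfl h2, Finset.sum_range_reflect]

/-- half sum lower bound -/
lemma half_sum (m : ℕ) : 4^m ≤ 2 * ∑ i ∈ Finset.range (m+1), (2*m).choose i := by
  have htot : ∑ i ∈ Finset.range (2*m+1), (2*m).choose i = 4^m := by
    rw [Nat.sum_range_choose]
    rw [show (4:ℕ)^m = 2^(2*m) by rw [pow_mul]; norm_num]
  have hsplit : ∑ i ∈ Finset.range (m+1), (2*m).choose i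
      + ∑ i ∈ Finset.Ico (m+1) (2*m+1), (2*m).choose i
      = ∑ i ∈ Finset.range (2*m+1), (2*m).choose i := by
    simp only [Finset.range_eq_Ico]
    exact Finset.sum_Ico_consecutive _ (by omega) (by omega)
  have htail : ∑ i ∈ Finset.Ico (m+1) (2*m+1), (2*m).choose i
      ≤ ∑ i ∈ Finset.range (m+1), (2*m).choose i := by
    rcases Nat.eq_zero_or_pos m with hm | hm
    · subst hm; simp
    · have := tail_refl m 1 hm
      rw [show m+1 = m+1 by rfl] at this
      rw [this]
      apply Finset.sum_le_sum_of_subset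
      intro i hi; simp only [Finset.mem_range] at *; omega
  omega

/-- a window of length `M` of binomial coefficients is at most `M * central` -/
lemma window_le (m a b : ℕ) :
    ∑ i ∈ Finset.Ico a b, (2*m).choose i ≤ (b - a) * (2*m).choose m := by
  calc ∑ i ∈ Finset.Ico a b, (2*m).choose i
      ≤ ∑ _i ∈ Finset.Ico a b, (2*m).choose m := by
        apply Finset.sum_le_sum
        intro i _
        have := Nat.choose_le_middle i (2*m)
        rwa [show (2*m)/2 = m by omega] at this
    _ = (b - a) * (2*m).choose m := by rw [Finset.sum_const, Nat.card_Ico, smul_eq_mul]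

/-- central binomial coefficient bound: `B^2 * (2m+1) ≤ 16^m` -/
lemma central_sq (m : ℕ) : (Nat.centralBinom m)^2 * (2*m+1) ≤ 16^m := by
  induction m with
  | zero => simp [Nat.centralBinom]
  | succ m ih =>
    have hrec := Nat.succ_mul_centralBinom_succ m
    have hpos : 0 < (m+1)^2 := by positivity
    apply Nat.le_of_mul_le_mul_right _ hpos
    have h1 : (Nat.centralBinom (m+1))^2 * (2*(m+1)+1) * (m+1)^2
        = (2*(2*m+1)*Nat.centralBinom m)^2 * (2*m+3) := by
      rw [← hrec]; ring
    rw [h1]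
    have h2 : (2*(2*m+1)*Nat.centralBinom m)^2 * (2*m+3)
        = 4*(2*m+1)*(2*m+3) * ((Nat.centralBinom m)^2 * (2*m+1)) := by ring
    rw [h2]
    calc 4*(2*m+1)*(2*m+3) * ((Nat.centralBinom m)^2 * (2*m+1))
        ≤ 4*(2*m+1)*(2*m+3) * 16^m := Nat.mul_le_mul_left _ ih
      _ ≤ 16^(m+1) * (m+1)^2 := by
          rw [pow_succ]
          nlinarith [sq_nonneg (m:ℕ)]

lemma prEvent_congr {α : Type*} [Fintype α] [DecidableEq α] (p : α → ℝ)
    (E E' : Finset α → Prop) (h : ∀ T, E T ↔ E' T) : prEvent p E = prEvent p E' := by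
  unfold prEvent
  exact Finset.sum_congr rfl fun T _ => by rw [if_congr (h T) rfl rfl]

/-- Tightness example: for every `ε > 0` and positive integer `M`, there are a finite
ground set and a monotone subadditive `v` with `v ∅ = 0` and all singletons of value
at most `1`, such that under independent sampling with probability `1/2`, `M` is a
median of `v(S')` and `E[v(S')] ≥ (3/2)·M - ε`. -/
theorem stmt13 (ε : ℝ) (hε : 0 < ε) (M : ℕ) (hM : 0 < M) :
    ∃ (s : ℕ) (v : Finset (Fin s) → ℝ),
      (∀ A B : Finset (Fin s), A ⊆ B → v A ≤ v B) ∧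
      (∀ A B : Finset (Fin s), v (A ∪ B) ≤ v A + v B) ∧
      v ∅ = 0 ∧
      (∀ e : Fin s, v {e} ≤ 1) ∧
      1 / 2 ≤ prEvent (fun _ : Fin s => 1 / 2) (fun T => v T ≤ (M : ℝ)) ∧
      1 / 2 ≤ prEvent (fun _ : Fin s => 1 / 2) (fun T => (M : ℝ) ≤ v T) ∧
      3 / 2 * (M : ℝ) - ε ≤ expVal (fun _ : Fin s => 1 / 2) v := by
  set m : ℕ := M + ⌈4 * (M:ℝ)^4 / ε^2⌉₊ with hm
  have hMm : M ≤ m := by omega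
  have hmK : (4 * (M:ℝ)^4 / ε^2) ≤ (2*m+1 : ℕ) := by
    have h1 := Nat.le_ceil (4 * (M:ℝ)^4 / ε^2)
    have h2 : ((⌈4 * (M:ℝ)^4 / ε^2⌉₊ : ℕ) : ℝ) ≤ ((2*m+1 : ℕ) : ℝ) := by
      have h3 : (⌈4 * (M:ℝ)^4 / ε^2⌉₊ : ℕ) ≤ 2*m+1 := by omega
      exact_mod_cast h3
    linarith
  refine ⟨2*m, fun T => ((min T.card M + min (T.card - m) M : ℕ) : ℝ), ?_, ?_, ?_, ?_, ?_, ?_, ?_⟩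
  · intro A B hAB
    have h := Finset.card_le_card hAB
    have h2 : min A.card M + min (A.card - m) M ≤ min B.card M + min (B.card - m) M := by omega
    show ((min A.card M + min (A.card - m) M : ℕ) : ℝ) ≤ ((min B.card M + min (B.card - m) M : ℕ) : ℝ)
    exact_mod_cast h2
  · intro A B
    have h := Finset.card_union_le A B
    push_cast
    exact_mod_cast (by omega :
      min (A ∪ B).card M + min ((A ∪ B).card - m) M
        ≤ (min A.card M + min (A.card - m) M) + (min B.card M + min (B.card - m) M))
  · simp
  · intro e
    simp only [Finset.card_singleton]
    have h2 : min 1 M + min (1 - m) M ≤ 1 := by omega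
    exact_mod_cast h2
  · -- P(v ≤ M) ≥ 1/2
    have hiff : ∀ T : Finset (Fin (2*m)),
        (((min T.card M + min (T.card - m) M : ℕ) : ℝ) ≤ (M:ℝ)) ↔ (T.card ≤ m) := by
      intro T
      rw [show ((M:ℝ)) = ((M:ℕ):ℝ) from rfl, Nat.cast_le]
      constructor <;> intro h <;> omega
    have key : (1/2:ℝ) ≤ prEvent (fun _ : Fin (2*m) => (1/2:ℝ))
        (fun T : Finset (Fin (2*m)) => T.card ≤ m) := by
      have e2 : prEvent (fun _ : Fin (2*m) => (1/2:ℝ)) (fun T : Finset (Fin (2*m)) => T.card ≤ m)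
          = (1/2:ℝ)^(2*m) * ((∑ i ∈ Finset.range (m+1), (2*m).choose i : ℕ) : ℝ) := by
        rw [prEvent_card (n := 2*m) (fun i => i ≤ m),
          ind_sum (2*m) _ (Finset.range (m+1)) (by ext i; simp [Finset.mem_filter, Finset.mem_range]; omega)]
      rw [e2]
      have hc : (4:ℝ)^m ≤ 2 * ((∑ i ∈ Finset.range (m+1), (2*m).choose i : ℕ):ℝ) := by
        exact_mod_cast half_sum m
      have hp : (1/2:ℝ)^(2*m) = ((4:ℝ)^m)⁻¹ := by
        rw [pow_mul, ← inv_pow]; norm_num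
      rw [hp]
      have h4 : (0:ℝ) < 4^m := by positivity
      rw [inv_mul_eq_div, le_div_iff₀ h4]
      linarith
    exact le_of_le_of_eq key (prEvent_congr _ _ _ hiff).symm
  · -- P(v ≥ M) ≥ 1/2
    have hiff : ∀ T : Finset (Fin (2*m)),
        ((M:ℝ) ≤ ((min T.card M + min (T.card - m) M : ℕ) : ℝ)) ↔ (M ≤ T.card) := by
      intro T
      rw [show ((M:ℝ)) = ((M:ℕ):ℝ) from rfl, Nat.cast_le]
      constructor <;> intro h <;> omega
    have key : (1/2:ℝ) ≤ prEvent (fun _ : Fin (2*m) => (1/2:ℝ))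
        (fun T : Finset (Fin (2*m)) => M ≤ T.card) := by
      have e2 : prEvent (fun _ : Fin (2*m) => (1/2:ℝ)) (fun T : Finset (Fin (2*m)) => M ≤ T.card)
          = (1/2:ℝ)^(2*m) * ((∑ i ∈ Finset.Ico M (2*m+1), (2*m).choose i : ℕ) : ℝ) := by
        rw [prEvent_card (n := 2*m) (fun i => M ≤ i),
          ind_sum (2*m) _ (Finset.Ico M (2*m+1)) (by ext i; simp [Finset.mem_filter, Finset.mem_range, Finset.mem_Ico]; omega)]
      rw [e2]
      have hnat : 4^m ≤ 2 * ∑ i ∈ Finset.Ico M (2*m+1), (2*m).choose i := by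
        have hsub : ∑ i ∈ Finset.Ico m (2*m+1), (2*m).choose i
            ≤ ∑ i ∈ Finset.Ico M (2*m+1), (2*m).choose i :=
          Finset.sum_le_sum_of_subset (Finset.Ico_subset_Ico hMm le_rfl)
        have hrefl := tail_refl m 0 (Nat.zero_le m)
        simp only [Nat.add_zero, Nat.sub_zero] at hrefl
        have := half_sum m
        omega
      have hc : (4:ℝ)^m ≤ 2 * ((∑ i ∈ Finset.Ico M (2*m+1), (2*m).choose i : ℕ):ℝ) := by
        exact_mod_cast hnat
      have hp : (1/2:ℝ)^(2*m) = ((4:ℝ)^m)⁻¹ := by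
        rw [pow_mul, ← inv_pow]; norm_num
      rw [hp]
      have h4 : (0:ℝ) < 4^m := by positivity
      rw [inv_mul_eq_div, le_div_iff₀ h4]
      linarith
    exact le_of_le_of_eq key (prEvent_congr _ _ _ hiff).symm
  · -- expectation
    have e2 : expVal (fun _ : Fin (2*m) => (1/2:ℝ))
        (fun T : Finset (Fin (2*m)) => ((min T.card M + min (T.card - m) M : ℕ) : ℝ))
        = (1/2:ℝ)^(2*m) * ∑ i ∈ Finset.range (2*m+1),
            ((2*m).choose i : ℝ) * ((min i M + min (i - m) M : ℕ) : ℝ) :=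
      expVal_card (fun i => ((min i M + min (i - m) M : ℕ) : ℝ))
    have ecast : ∑ i ∈ Finset.range (2*m+1),
        ((2*m).choose i : ℝ) * ((min i M + min (i - m) M : ℕ) : ℝ)
        = ((∑ i ∈ Finset.range (2*m+1), (2*m).choose i * (min i M + min (i - m) M) : ℕ) : ℝ) := by
      push_cast; rfl
    -- nat abbreviations
    set T' : ℕ := ∑ i ∈ Finset.range (2*m+1), (2*m).choose i * (min i M + min (i - m) M) with hT'
    set Smid : ℕ := ∑ i ∈ Finset.Ico M (m+M), (2*m).choose i with hSmid
    set S2 : ℕ := ∑ i ∈ Finset.Ico (m+M) (2*m+1), (2*m).choose i with hS2def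
    set B : ℕ := (2*m).choose m with hB'
    -- T' ≥ M * Smid + 2*M*S2
    have hT : M * Smid + 2*M*S2 ≤ T' := by
      have hsub : ∑ i ∈ Finset.Ico M (2*m+1), (2*m).choose i * (min i M + min (i - m) M) ≤ T' := by
        apply Finset.sum_le_sum_of_subset
        intro i hi; simp only [Finset.mem_Ico, Finset.mem_range] at *; omega
      have hsplit : ∑ i ∈ Finset.Ico M (m+M), (2*m).choose i * (min i M + min (i - m) M)
          + ∑ i ∈ Finset.Ico (m+M) (2*m+1), (2*m).choose i * (min i M + min (i - m) M)
          = ∑ i ∈ Finset.Ico M (2*m+1), (2*m).choose i * (min i M + min (i - m) M) :=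
        Finset.sum_Ico_consecutive _ (by omega) (by omega)
      have hmid : M * Smid ≤ ∑ i ∈ Finset.Ico M (m+M), (2*m).choose i * (min i M + min (i - m) M) := by
        rw [hSmid, Finset.mul_sum]
        apply Finset.sum_le_sum
        intro i hi
        simp only [Finset.mem_Ico] at hi
        have h1 : M ≤ min i M + min (i - m) M := by omega
        calc M * (2*m).choose i = (2*m).choose i * M := by ring
          _ ≤ _ := Nat.mul_le_mul_left _ h1
      have htail : 2*M*S2 ≤ ∑ i ∈ Finset.Ico (m+M) (2*m+1), (2*m).choose i * (min i M + min (i - m) M) := by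
        rw [hS2def, Finset.mul_sum]
        apply Finset.sum_le_sum
        intro i hi
        simp only [Finset.mem_Ico] at hi
        have h1 : 2*M ≤ min i M + min (i - m) M := by omega
        calc 2*M * (2*m).choose i = (2*m).choose i * (2*M) := by ring
          _ ≤ _ := Nat.mul_le_mul_left _ h1
      omega
    -- S1 bound
    have hS1 : 4^m ≤ Smid + S2 + M * B := by
      have htot : ∑ i ∈ Finset.range (2*m+1), (2*m).choose i = 4^m := by
        rw [Nat.sum_range_choose, show (4:ℕ)^m = 2^(2*m) by rw [pow_mul]; norm_num]
      have hsplit1 : ∑ i ∈ Finset.Ico 0 M, (2*m).choose i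
          + ∑ i ∈ Finset.Ico M (2*m+1), (2*m).choose i
          = ∑ i ∈ Finset.Ico 0 (2*m+1), (2*m).choose i :=
        Finset.sum_Ico_consecutive _ (by omega) (by omega)
      have hsplit2 : Smid + S2 = ∑ i ∈ Finset.Ico M (2*m+1), (2*m).choose i :=
        Finset.sum_Ico_consecutive _ (by omega) (by omega)
      have hw := window_le m 0 M
      simp only [Nat.sub_zero] at hw
      rw [← hB'] at hw
      simp only [Finset.range_eq_Ico] at htot
      omega
    -- S2 bound
    have hS2 : 4^m ≤ 2*S2 + 2*(M*B) := by
      have hrefl := tail_refl m M hMm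
      have hsplit : ∑ i ∈ Finset.Ico 0 (m-M+1), (2*m).choose i
          + ∑ i ∈ Finset.Ico (m-M+1) (m+1), (2*m).choose i
          = ∑ i ∈ Finset.Ico 0 (m+1), (2*m).choose i :=
        Finset.sum_Ico_consecutive _ (by omega) (by omega)
      have hw := window_le m (m-M+1) (m+1)
      have hwM : (m+1) - (m-M+1) = M := by omega
      rw [hwM, ← hB'] at hw
      have hh := half_sum m
      simp only [Finset.range_eq_Ico] at hh hrefl
      omega
    -- central binomial bound over ℝ
    have h4pos : (0:ℝ) < 4^m := by positivity
    have hBR : 2*(M:ℝ)^2 * B ≤ ε * 4^m := by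
      have hc : ((B:ℝ))^2 * (2*m+1) ≤ 16^m := by
        have := central_sq m
        rw [Nat.centralBinom] at this
        exact_mod_cast this
      have hK' : 4*(M:ℝ)^4 ≤ ε^2 * (2*m+1) := by
        rw [div_le_iff₀ (by positivity : (0:ℝ) < ε^2)] at hmK
        push_cast at hmK ⊢
        linarith
      have h16 : (16:ℝ)^m = (4^m)^2 := by
        rw [← pow_mul, pow_mul']; norm_num
      apply le_of_pow_le_pow_left₀ (two_ne_zero) (by positivity)
      have hBnn : (0:ℝ) ≤ (B:ℝ) := Nat.cast_nonneg _
      nlinarith [mul_le_mul_of_nonneg_right hK' (sq_nonneg (B:ℝ)),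
        mul_le_mul_of_nonneg_left hc (sq_nonneg ε), sq_nonneg ((B:ℝ)*ε)]
    -- assemble
    have hTc : (M:ℝ) * Smid + 2*(M:ℝ)*S2 ≤ (T':ℝ) := by exact_mod_cast hT
    have hS1c : (4:ℝ)^m ≤ (Smid:ℝ) + S2 + M * B := by exact_mod_cast hS1
    have hS2c : (4:ℝ)^m ≤ 2*(S2:ℝ) + 2*((M:ℝ)*B) := by exact_mod_cast hS2
    have hMnn : (0:ℝ) ≤ (M:ℝ) := Nat.cast_nonneg _
    have hMS1 : (M:ℝ) * 4^m ≤ M * ((Smid:ℝ) + S2 + M * B) := mul_le_mul_of_nonneg_left hS1c hMnn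
    have hMS2 : (M:ℝ) * 4^m ≤ M * (2*(S2:ℝ) + 2*((M:ℝ)*B)) := mul_le_mul_of_nonneg_left hS2c hMnn
    rw [e2, ecast]
    have hp : (1/2:ℝ)^(2*m) = ((4:ℝ)^m)⁻¹ := by
      rw [pow_mul, ← inv_pow]; norm_num
    rw [hp, inv_mul_eq_div, le_div_iff₀ h4pos]
    nlinarith [hTc, hMS1, hMS2, hBR]
end

section
/- Let v : Finset M → ℝ be a monotone set function over a finite set M of items, let n ≥ 2, and let e ∈ M be any item. Then the maximin share over n − 1 bundles of the reduced item set satisfies MMS^{n−1}_v(M \ {e}) ≥ MMS^n_v(M). -/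
open scoped Classical

/-- `B` is a partition of the item set `S` into `k` (possibly empty) bundles. -/
def IsPartitionOn {ι : Type*} [DecidableEq ι] (S : Finset ι) {k : ℕ}
    (B : Fin k → Finset ι) : Prop :=
  (∀ i j, i ≠ j → Disjoint (B i) (B j)) ∧ Finset.univ.biUnion B = S

/-- The set of attainable minimum bundle values over partitions of `S` into `k`
bundles; its greatest element is the maximin share `MMS^k_v(S)`. -/
def mmsVals {ι : Type*} [DecidableEq ι] (v : Finset ι → ℝ) (S : Finset ι)
    (k : ℕ) : Set ℝ :=
  {x | ∃ B : Fin k → Finset ι, IsPartitionOn S B ∧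
    x = sInf (Set.range fun j : Fin k => v (B j))}

/-- For a monotone valuation `v`, `n ≥ 2` and any item `e`, removing `e` and one
bundle does not decrease the maximin share:
`MMS^{n-1}_v(M \ {e}) ≥ MMS^n_v(M)`. -/
theorem stmt15 {ι : Type*} [Fintype ι] [DecidableEq ι]
    (v : Finset ι → ℝ)
    (hmono : ∀ A B : Finset ι, A ⊆ B → v A ≤ v B)
    (n : ℕ) (hn : 2 ≤ n) (e : ι)
    (m₁ m₂ : ℝ)
    (h₁ : IsGreatest (mmsVals v Finset.univ n) m₁)
    (h₂ : IsGreatest (mmsVals v (Finset.univ \ {e}) (n - 1)) m₂) :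
    m₁ ≤ m₂ := by
  obtain ⟨B, ⟨hdisj, hunion⟩, hm₁⟩ := h₁.1
  obtain ⟨m, rfl⟩ : ∃ m, n = m + 1 := ⟨n - 1, (Nat.succ_pred_eq_of_pos (by omega)).symm⟩
  have hm1 : 1 ≤ m := by omega
  simp only [Nat.add_sub_cancel] at h₂
  have he : e ∈ Finset.univ.biUnion B := by rw [hunion]; exact Finset.mem_univ e
  obtain ⟨i₀, -, hei₀⟩ := Finset.mem_biUnion.mp he
  set j₀ : Fin m := ⟨0, hm1⟩ with hj₀
  set C : Fin m → Finset ι :=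
    fun j => if j = j₀ then B (i₀.succAbove j) ∪ (B i₀ \ {e}) else B (i₀.succAbove j) with hC
  have hsub : ∀ j, B (i₀.succAbove j) ⊆ C j := by
    intro j
    by_cases h : j = j₀ <;> simp [hC, h]
  have hne : ∀ j : Fin m, i₀.succAbove j ≠ i₀ := fun j => Fin.succAbove_ne i₀ j
  have h2 : ∀ k : Fin m, Disjoint (B i₀ \ {e}) (B (i₀.succAbove k)) := fun k =>
    Finset.disjoint_of_subset_left Finset.sdiff_subset (hdisj _ _ (hne k).symm)
  have hCdisj : ∀ i j, i ≠ j → Disjoint (C i) (C j) := by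
    intro i j hij
    have h1 : Disjoint (B (i₀.succAbove i)) (B (i₀.succAbove j)) :=
      hdisj _ _ (fun h => hij (Fin.succAbove_right_injective h))
    by_cases hi : i = j₀ <;> by_cases hj : j = j₀
    · exact absurd (hi.trans hj.symm) hij
    · simp only [hC, if_pos hi, if_neg hj]
      exact Finset.disjoint_union_left.mpr ⟨h1, h2 j⟩
    · simp only [hC, if_neg hi, if_pos hj]
      exact Finset.disjoint_union_right.mpr ⟨h1, (h2 i).symm⟩
    · simpa only [hC, if_neg hi, if_neg hj] using h1
  have hCunion : Finset.univ.biUnion C = Finset.univ \ {e} := by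
    ext x
    simp only [Finset.mem_biUnion, Finset.mem_univ, true_and, Finset.mem_sdiff,
      Finset.mem_singleton]
    constructor
    · rintro ⟨j, hx⟩
      by_cases hjj : j = j₀
      · simp only [hC, if_pos hjj, Finset.mem_union, Finset.mem_sdiff,
          Finset.mem_singleton] at hx
        rcases hx with hx | hx
        · exact fun hxe => Finset.disjoint_left.mp (hdisj _ _ (hne j)) hx (hxe ▸ hei₀)
        · exact hx.2
      · simp only [hC, if_neg hjj] at hx
        exact fun hxe => Finset.disjoint_left.mp (hdisj _ _ (hne j)) hx (hxe ▸ hei₀)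
    · intro hx
      have hxu : x ∈ Finset.univ.biUnion B := by rw [hunion]; exact Finset.mem_univ x
      obtain ⟨i, -, hxi⟩ := Finset.mem_biUnion.mp hxu
      by_cases hii : i = i₀
      · refine ⟨j₀, ?_⟩
        simp only [hC, if_pos rfl, Finset.mem_union, Finset.mem_sdiff, Finset.mem_singleton]
        exact Or.inr ⟨hii ▸ hxi, hx⟩
      · obtain ⟨j, hj⟩ := Fin.exists_succAbove_eq hii
        exact ⟨j, hsub j (hj ▸ hxi)⟩
  have hmem : sInf (Set.range fun j : Fin m => v (C j)) ∈ mmsVals v (Finset.univ \ {e}) m :=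
    ⟨C, ⟨hCdisj, hCunion⟩, rfl⟩
  have hbdd : BddBelow (Set.range fun i : Fin (m + 1) => v (B i)) :=
    (Set.finite_range _).bddBelow
  have key : ∀ j : Fin m, m₁ ≤ v (C j) := by
    intro j
    calc m₁ = sInf (Set.range fun i : Fin (m + 1) => v (B i)) := hm₁
      _ ≤ v (B (i₀.succAbove j)) := csInf_le hbdd ⟨i₀.succAbove j, rfl⟩
      _ ≤ v (C j) := hmono _ _ (hsub j)
  calc m₁ ≤ sInf (Set.range fun j : Fin m => v (C j)) := by
        refine le_csInf ⟨v (C j₀), ⟨j₀, rfl⟩⟩ ?_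
        rintro x ⟨j, rfl⟩
        exact key j
    _ ≤ m₂ := h₂.2 hmem
end
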